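/- arXiv:1710.11314 — 12 statements merged into one kernel-verified Lean document; each statement's English description precedes it below -/
import Mathlib

section
/- Let K = 𝔽_q be a finite field with q elements and let 𝒢 be a simple graph with n vertices and m connected components, of which ε are non-bipartite. Then the cardinality of the affine algebraic toric set X*_𝒢 parameterized by the edges of 𝒢 equals (q−1)^{n−m+ε} if 2 does not divide q−1, and equals (q−1)^{n−m+ε}/2^ε if 2 divides q−1. -/
/-- The affine algebraic toric set parameterized by the edges of a simple graph `G`:
the set of tuples `(x^{e₁}, …, x^{e_s})` where `x : V → K` has all coordinates nonzero and
`x^{e}` is the product of the values of `x` at the two endpoints of the edge `e`. -/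
def graphToricSet {V : Type} (G : SimpleGraph V) (K : Type) [Field K] :
    Set (G.edgeSet → K) :=
  {y | ∃ x : V → K, (∀ v, x v ≠ 0) ∧
    ∀ e : G.edgeSet,
      y e = Sym2.lift ⟨fun a b => x a * x b, fun a b => mul_comm (x a) (x b)⟩ (e : Sym2 V)}

/-!
The toric set is the image of the homomorphism `(K*)^V → (K*)^E`, `x ↦ (x_a x_b)_{ab}`, so its
size is `(q-1)^n / |ker|`. Along every edge a kernel element satisfies `x_b = x_a⁻¹`, hence
`x_v = x_u^{±1}` according to the parity of any walk from `u` to `v`. On a connected component it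
is therefore determined by its value `t` at one vertex: `t` is free when the component is
bipartite (all walks between two vertices have the same parity), while an odd closed walk forces
`t = t⁻¹`. Thus `|ker| = (q-1)^(m-ε) · |{t | t² = 1}|^ε`, and `t² = 1` has two solutions in `K*`
when `q` is odd and one when `q` is even.
-/

theorem Nat.card_subtype_imp {α : Type*} (P : Prop) [Decidable P] (Q : α → Prop) :
    Nat.card {a // P → Q a} = if P then Nat.card {a // Q a} else Nat.card α := by
  split_ifs with hP <;> simp [hP]

theorem Finset.prod_univ_ite_const {ι M : Type*} [Fintype ι] [CommMonoid M] (P : ι → Prop)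
    [DecidablePred P] (a b : M) :
    ∏ i, (if P i then a else b) =
      a ^ Nat.card {i // P i} * b ^ (Nat.card ι - Nat.card {i // P i}) := by
  rw [Finset.prod_ite, Finset.prod_const, Finset.prod_const, Nat.card_eq_fintype_card,
    Nat.card_eq_fintype_card, Fintype.card_subtype, ← Finset.card_univ,
    ← Finset.card_filter_add_card_filter_not (s := Finset.univ) P, Nat.add_sub_cancel_left]

theorem zpow_neg_one_pow_of_sq_eq_one {M : Type*} [Group M] {t : M} (ht : t ^ 2 = 1) (k : ℕ) :
    t ^ ((-1 : ℤ) ^ k) = t := by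
  rcases neg_one_pow_eq_or ℤ k with h | h
  · rw [h, zpow_one]
  · rw [h, zpow_neg_one, inv_eq_of_mul_eq_one_right (by rwa [← sq])]

theorem FiniteField.card_units_sq_eq_one (K : Type*) [Field K] [Fintype K] :
    Nat.card {t : Kˣ // t ^ 2 = 1} = if 2 ∣ Fintype.card K - 1 then 2 else 1 := by
  have hsq : {t : Kˣ | t ^ 2 = 1} = {1, -1} := by
    ext t
    simp only [Set.mem_ofPred_eq, Set.mem_insert_iff, Set.mem_singleton_iff, Units.ext_iff,
      Units.val_pow_eq_pow_val, Units.val_one, Units.val_neg, sq_eq_one_iff]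
  have hchar : (-1 : Kˣ) = 1 ↔ ¬ 2 ∣ Fintype.card K - 1 := by
    have := Fintype.card_pos (α := K)
    rw [Units.ext_iff, Units.val_neg, Units.val_one, neg_one_eq_one_iff,
      FiniteField.even_card_iff_char_two]
    omega
  change Nat.card {t : Kˣ | t ^ 2 = 1} = _
  rw [hsq]
  split_ifs with h
  · rw [Nat.card_coe_set_eq, Set.ncard_pair fun h' => hchar.mp h'.symm h]
  · rw [hchar.mpr h, Set.pair_eq_singleton, Nat.card_unique]

namespace SimpleGraph

variable {V : Type*}

section EdgeMonomial

variable (G : SimpleGraph V) (M : Type*) [CommMonoid M]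

def edgeMonomial : (V → M) →* (G.edgeSet → M) where
  toFun x e := Sym2.lift ⟨fun a b => x a * x b, fun a b => mul_comm (x a) (x b)⟩ (e : Sym2 V)
  map_one' := by
    funext ⟨e, he⟩
    induction e using Sym2.ind
    simp
  map_mul' x y := by
    funext ⟨e, he⟩
    induction e using Sym2.ind
    exact mul_mul_mul_comm _ _ _ _

variable {G M}

@[simp]
theorem edgeMonomial_apply_mk (x : V → M) {a b : V} (h : s(a, b) ∈ G.edgeSet) :
    edgeMonomial G M x ⟨s(a, b), h⟩ = x a * x b :=
  rfl

end EdgeMonomial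

def IsEdgeInv {M : Type*} [Mul M] [One M] (G : SimpleGraph V) (x : V → M) : Prop :=
  ∀ ⦃a b⦄, G.Adj a b → x a * x b = 1

theorem mem_ker_edgeMonomial_iff {M : Type*} [CommGroup M] {G : SimpleGraph V} {x : V → M} :
    x ∈ (edgeMonomial G M).ker ↔ G.IsEdgeInv x := by
  refine ⟨fun h a b hab => congrFun h ⟨s(a, b), hab⟩, fun h => funext fun ⟨e, he⟩ => ?_⟩
  induction e using Sym2.ind
  exact h he

section Preconnected

variable {M : Type*} [Group M] {G : SimpleGraph V}

theorem even_length_add_length_of_colorable_two (hG : G.Colorable 2) {u v : V}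
    (p q : G.Walk u v) : Even (p.length + q.length) := by
  simpa using two_colorable_iff_forall_loop_even.mp hG u (p.append q.reverse)

theorem IsEdgeInv.apply_eq_zpow {x : V → M} (hx : G.IsEdgeInv x) {u v : V} (p : G.Walk u v) :
    x v = x u ^ ((-1 : ℤ) ^ p.length) := by
  induction p with
  | nil => simp
  | cons h p ih =>
    rw [ih, eq_inv_of_mul_eq_one_right (hx h), Walk.length_cons, pow_succ, mul_neg_one, zpow_neg,
      inv_zpow]

theorem IsEdgeInv.sq_eq_one {x : V → M} (hx : G.IsEdgeInv x) (hG : ¬ G.Colorable 2)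
    (hconn : G.Preconnected) (u : V) : x u ^ 2 = 1 := by
  obtain ⟨w, c, hc⟩ : ∃ w, ∃ c : G.Walk w w, ¬ Even c.length := by
    simpa [two_colorable_iff_forall_loop_even] using hG
  obtain ⟨p⟩ := hconn u w
  have hodd : ¬ Even ((p.append c).append p.reverse).length := by
    simp only [Walk.length_append, Walk.length_reverse]
    grind
  have h := hx.apply_eq_zpow ((p.append c).append p.reverse)
  rw [(Nat.not_even_iff_odd.mp hodd).neg_one_pow, zpow_neg_one] at h
  rw [sq, mul_eq_one_iff_eq_inv]
  exact h

variable (hG : G.Preconnected) (w₀ : V)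

noncomputable def parityLabeling (t : M) (v : V) : M :=
  t ^ ((-1 : ℤ) ^ (hG w₀ v).some.length)

variable {hG w₀}

theorem parityLabeling_eq {t : M} (ht : ¬ G.Colorable 2 → t ^ 2 = 1) {v : V}
    (p : G.Walk w₀ v) : parityLabeling hG w₀ t v = t ^ ((-1 : ℤ) ^ p.length) := by
  by_cases hc : G.Colorable 2
  · rw [parityLabeling, neg_one_pow_congr
      (Nat.even_add.mp (even_length_add_length_of_colorable_two hc _ p))]
  · rw [parityLabeling, zpow_neg_one_pow_of_sq_eq_one (ht hc),
      zpow_neg_one_pow_of_sq_eq_one (ht hc)]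

theorem isEdgeInv_parityLabeling {t : M} (ht : ¬ G.Colorable 2 → t ^ 2 = 1) :
    G.IsEdgeInv (parityLabeling hG w₀ t) := by
  intro a b hab
  obtain ⟨p⟩ := hG w₀ a
  rw [parityLabeling_eq ht p, parityLabeling_eq ht (p.concat hab), Walk.length_concat, pow_succ,
    mul_neg_one, zpow_neg, mul_inv_cancel]

variable (hG w₀ M)

noncomputable def isEdgeInvEquivOfPreconnected :
    {x : V → M // G.IsEdgeInv x} ≃ {t : M // ¬ G.Colorable 2 → t ^ 2 = 1} where
  toFun x := ⟨x.1 w₀, fun hc => x.2.sq_eq_one hc hG w₀⟩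
  invFun t := ⟨parityLabeling hG w₀ t, isEdgeInv_parityLabeling t.2⟩
  left_inv x := Subtype.ext <| funext fun _ => (x.2.apply_eq_zpow _).symm
  right_inv t := Subtype.ext <| (parityLabeling_eq t.2 Walk.nil).trans (by simp)

end Preconnected

variable (G : SimpleGraph V)

def isEdgeInvEquivPi (M : Type*) [Mul M] [One M] :
    {x : V → M // G.IsEdgeInv x} ≃
      ((c : G.ConnectedComponent) → {y : c.supp → M // (G.induce c.supp).IsEdgeInv y}) where
  toFun x c := ⟨fun v => x.1 v, fun _ _ hab => x.2 hab⟩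
  invFun y := ⟨fun v => (y (G.connectedComponentMk v)).1 ⟨v, rfl⟩, fun a b hab => by
    have key : ∀ c (v : V) (hv : v ∈ c.supp),
        (y (G.connectedComponentMk v)).1 ⟨v, rfl⟩ = (y c).1 ⟨v, hv⟩ := by
      rintro c v rfl
      rfl
    beta_reduce
    rw [key _ b (ConnectedComponent.connectedComponentMk_eq_of_adj hab.symm)]
    exact (y _).2 hab⟩
  left_inv _ := rfl
  right_inv y := funext fun c => Subtype.ext <| funext fun ⟨v, hv⟩ => by
    obtain rfl : G.connectedComponentMk v = c := hv
    rfl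

theorem card_isEdgeInv (M : Type*) [Group M] [Finite V] [Finite M] :
    Nat.card {x : V → M // G.IsEdgeInv x} =
      Nat.card {t : M // t ^ 2 = 1} ^ Nat.card {c : G.ConnectedComponent //
          ¬ (G.induce c.supp).Colorable 2} *
        Nat.card M ^ (Nat.card G.ConnectedComponent -
          Nat.card {c : G.ConnectedComponent // ¬ (G.induce c.supp).Colorable 2}) := by
  classical
  have := Fintype.ofFinite G.ConnectedComponent
  have hc (c : G.ConnectedComponent) :
      Nat.card {y : c.supp → M // (G.induce c.supp).IsEdgeInv y} =
        if ¬ (G.induce c.supp).Colorable 2 then Nat.card {t : M // t ^ 2 = 1} else Nat.card M := by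
    have hconn : (G.induce c.supp).Preconnected := c.connected_toSimpleGraph.preconnected
    rw [Nat.card_congr (isEdgeInvEquivOfPreconnected M hconn ⟨_, c.out_eq⟩),
      Nat.card_subtype_imp]
  rw [Nat.card_congr (G.isEdgeInvEquivPi M), Nat.card_pi, Finset.prod_congr rfl fun c _ => hc c,
    Finset.prod_univ_ite_const]

theorem card_range_edgeMonomial_mul {M : Type*} [CommGroup M] [Finite V] [Finite M] :
    Nat.card (edgeMonomial G M).range *
        Nat.card {t : M // t ^ 2 = 1} ^ Nat.card {c : G.ConnectedComponent //
          ¬ (G.induce c.supp).Colorable 2} =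
      Nat.card M ^ (Nat.card V - Nat.card G.ConnectedComponent +
        Nat.card {c : G.ConnectedComponent // ¬ (G.induce c.supp).Colorable 2}) := by
  set m := Nat.card G.ConnectedComponent
  set ε := Nat.card {c : G.ConnectedComponent // ¬ (G.induce c.supp).Colorable 2}
  have hεm : ε ≤ m := Nat.card_le_card_of_injective _ Subtype.val_injective
  have hmn : m ≤ Nat.card V := Nat.card_le_card_of_surjective _ fun c => c.exists_rep
  have hker : Nat.card (edgeMonomial G M).ker = Nat.card {x : V → M // G.IsEdgeInv x} :=
    Nat.card_congr (Equiv.subtypeEquivRight fun _ => mem_ker_edgeMonomial_iff)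
  have h := (edgeMonomial G M).ker.card_mul_index
  rw [Subgroup.index_ker, hker, card_isEdgeInv, Nat.card_fun] at h
  have hpos : 0 < Nat.card M ^ (m - ε) := pow_pos Nat.card_pos _
  refine Nat.eq_of_mul_eq_mul_right hpos ?_
  rw [← pow_add, show Nat.card V - m + ε + (m - ε) = Nat.card V by omega, ← h]
  ring

theorem graphToricSet_eq_image_range {V : Type} (G : SimpleGraph V) (K : Type) [Field K] :
    graphToricSet G K = (fun y : G.edgeSet → Kˣ => Units.val ∘ y) '' (edgeMonomial G Kˣ).range := by
  ext y
  constructor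
  · rintro ⟨x, hx, hy⟩
    refine ⟨edgeMonomial G Kˣ fun v => Units.mk0 (x v) (hx v), ⟨_, rfl⟩, funext fun e => ?_⟩
    obtain ⟨e, he⟩ := e
    induction e using Sym2.ind
    simp [hy]
  · rintro ⟨_, ⟨x, rfl⟩, rfl⟩
    refine ⟨fun v => x v, fun v => (x v).ne_zero, fun ⟨e, he⟩ => ?_⟩
    induction e using Sym2.ind
    simp

theorem ncard_graphToricSet {V : Type} (G : SimpleGraph V) (K : Type) [Field K] :
    (graphToricSet G K).ncard = Nat.card (edgeMonomial G Kˣ).range := by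
  rw [graphToricSet_eq_image_range, Set.ncard_image_of_injective _
    Units.val_injective.comp_left]
  rfl

end SimpleGraph

/-- Let `K = 𝔽_q` and let `G` be a simple graph with `n` vertices and `m`
connected components, of which `ε` are non-bipartite. Then the cardinality of the affine
algebraic toric set `X*_G` equals `(q−1)^(n−m+ε)` if `2 ∤ q−1`, and `(q−1)^(n−m+ε)/2^ε`
if `2 ∣ q−1`. -/
theorem card_graphToricSet (q n m ε : ℕ) (K : Type) [Field K] [Fintype K]
    (hq : Fintype.card K = q)
    (V : Type) [Fintype V] (G : SimpleGraph V)
    (hn : Fintype.card V = n)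
    (hm : Nat.card G.ConnectedComponent = m)
    (hε : Nat.card {c : G.ConnectedComponent // ¬ (G.induce c.supp).Colorable 2} = ε) :
    (graphToricSet G K).ncard =
      if 2 ∣ q - 1 then (q - 1) ^ (n - m + ε) / 2 ^ ε else (q - 1) ^ (n - m + ε) := by
  have hrange := G.card_range_edgeMonomial_mul (M := Kˣ)
  rw [Nat.card_units, Nat.card_eq_fintype_card (α := K), Nat.card_eq_fintype_card (α := V), hq,
    hn, hm, hε, FiniteField.card_units_sq_eq_one, hq] at hrange
  rw [G.ncard_graphToricSet, ← hrange]
  split_ifs <;> simp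
end

section
/- Let K = 𝔽_q be a finite field with q elements and let 𝒢 be a graph with m connected components, each of which is a cycle of odd length k. Then the cardinality of the affine algebraic toric set X*_𝒢 equals (q−1)^{km} if 2 does not divide q−1, and equals (q−1)^{km}/2^m if 2 divides q−1. -/
/-- The affine algebraic toric set parameterized by the disjoint union of `m` cycles of
length `k`: points of `K^{km}` indexed by `Fin m × Fin k`, where the coordinate `(i, j)`
(the `j`-th edge of the `i`-th cycle) is `x (i, j) * x (i, j+1)`, the indices of the
vertices of the `i`-th cycle being taken cyclically. -/
def cyclesToricSet (K : Type) [Field K] (k m : ℕ) : Set (Fin m × Fin k → K) :=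
  {y | ∃ x : Fin m × Fin k → K, (∀ p, x p ≠ 0) ∧
    ∀ p : Fin m × Fin k, y p = x p * x (p.1, finRotate k p.2)}

/-!
The toric set is the image, under the injective map `(Kˣ)^(km) → K^(km)`, of the range of the
group endomorphism `x ↦ (x p * x (σ p))_p` of `(Kˣ)^(km)`, where `σ` rotates every cycle; so
its size is `(q - 1)^(km) / |ker|`. On an odd cycle a kernel element is constant with square
`1`, so the kernel is `μ₂(K)^m`, of order `gcd(q - 1, 2)^m` because `Kˣ` is cyclic.
-/

open Equiv Fin.NatCast

section EdgeMulHom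

variable {ι G : Type*} [CommGroup G]

def edgeMulHom (σ : Perm ι) : (ι → G) →* (ι → G) where
  toFun x p := x p * x (σ p)
  map_one' := by ext; simp
  map_mul' x y := by ext; simp [mul_mul_mul_comm]

theorem mem_ker_edgeMulHom {σ : Perm ι} {x : ι → G} :
    x ∈ (edgeMulHom σ).ker ↔ ∀ p, x (σ p) = (x p)⁻¹ := by
  simp only [MonoidHom.mem_ker, funext_iff]
  exact forall_congr' fun p => mul_eq_one_iff_eq_inv'

theorem apply_pow_apply_eq_of_apply_eq {α : Type*} {τ : Perm ι} {f : ι → α}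
    (h : ∀ p, f (τ p) = f p) (n : ℕ) (p : ι) : f ((τ ^ n) p) = f p := by
  induction n with
  | zero => rfl
  | succ n ih => rw [pow_succ', Perm.mul_apply, h, ih]

/-- Going twice around an edge returns to the same value, so kernel elements are
`σ²`-invariant; as `σ` is a power of `σ²` when its order divides an odd number, they are
`σ`-invariant, and then `x p = (x p)⁻¹`. -/
theorem mem_ker_edgeMulHom_iff_of_odd {σ : Perm ι} {k : ℕ} (hσ : σ ^ k = 1) (hk : Odd k)
    {x : ι → G} :
    x ∈ (edgeMulHom σ).ker ↔ (∀ p, x (σ p) = x p) ∧ ∀ p, x p ^ 2 = 1 := by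
  rw [mem_ker_edgeMulHom]
  constructor
  · intro hx
    have hσσ : ∀ p, x ((σ ^ 2) p) = x p := fun p => by
      rw [sq, Perm.mul_apply, hx, hx, inv_inv]
    obtain ⟨n, rfl⟩ := hk
    have hinv : ∀ p, x (σ p) = x p := fun p => by
      have : σ = (σ ^ 2) ^ (n + 1) := by
        rw [← pow_mul, show 2 * (n + 1) = 2 * n + 1 + 1 by ring, pow_succ, hσ, one_mul]
      rw [this, apply_pow_apply_eq_of_apply_eq hσσ]
    refine ⟨hinv, fun p => ?_⟩
    rw [sq, mul_eq_one_iff_eq_inv', ← hx, hinv]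
  · rintro ⟨hinv, hsq⟩ p
    rw [hinv, eq_inv_iff_mul_eq_one, ← sq, hsq]

end EdgeMulHom

theorem finRotate_pow_apply {k : ℕ} [NeZero k] (n : ℕ) (j : Fin k) :
    (finRotate k ^ n) j = j + (n : Fin k) := by
  induction n with
  | zero => simp
  | succ n ih => rw [pow_succ', Perm.mul_apply, ih, finRotate_apply, Nat.cast_succ, add_assoc]

theorem finRotate_pow_self (k : ℕ) : finRotate k ^ k = 1 := by
  rcases Nat.eq_zero_or_pos k with rfl | hk
  · rfl
  · have : NeZero k := ⟨hk.ne'⟩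
    ext j
    simp [finRotate_pow_apply]

def cycleRotation (k m : ℕ) : Perm (Fin m × Fin k) := prodCongrRight fun _ => finRotate k

theorem cycleRotation_pow_apply (k m n : ℕ) (p : Fin m × Fin k) :
    (cycleRotation k m ^ n) p = (p.1, (finRotate k ^ n) p.2) := by
  induction n with
  | zero => rfl
  | succ n ih => rw [pow_succ', Perm.mul_apply, ih, pow_succ', Perm.mul_apply]; rfl

theorem cycleRotation_pow_self (k m : ℕ) : cycleRotation k m ^ k = 1 := by
  ext p <;> simp [cycleRotation_pow_apply, finRotate_pow_self]

theorem cycleRotation_pow_val_apply_zero {k m : ℕ} [NeZero k] (p : Fin m × Fin k) :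
    (cycleRotation k m ^ (p.2 : ℕ)) (p.1, 0) = p := by
  simp [cycleRotation_pow_apply, finRotate_pow_apply]

theorem mem_ker_edgeMulHom_cycleRotation_iff {G : Type*} [CommGroup G] {k m : ℕ} [NeZero k]
    (hk : Odd k) {x : Fin m × Fin k → G} :
    x ∈ (edgeMulHom (cycleRotation k m)).ker ↔ ∀ p, x p = x (p.1, 0) ∧ x p ^ 2 = 1 := by
  rw [mem_ker_edgeMulHom_iff_of_odd (cycleRotation_pow_self k m) hk]
  constructor
  · rintro ⟨hinv, hsq⟩ p
    refine ⟨?_, hsq p⟩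
    conv_lhs => rw [← cycleRotation_pow_val_apply_zero p]
    exact apply_pow_apply_eq_of_apply_eq hinv _ _
  · intro h
    exact ⟨fun p => (h _).1.trans (h p).1.symm, fun p => (h p).2⟩

def kerEdgeMulHomCycleRotationEquiv (G : Type*) [CommGroup G] {k : ℕ} [NeZero k] (m : ℕ)
    (hk : Odd k) :
    (edgeMulHom (G := G) (cycleRotation k m)).ker ≃
      (Fin m → (powMonoidHom 2 : G →* G).ker) where
  toFun x i := ⟨x.1 (i, 0), ((mem_ker_edgeMulHom_cycleRotation_iff hk).1 x.2 _).2⟩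
  invFun c := ⟨fun p => c p.1,
    (mem_ker_edgeMulHom_cycleRotation_iff hk).2 fun p => ⟨rfl, (c p.1).2⟩⟩
  left_inv x := Subtype.ext <| funext fun p =>
    (((mem_ker_edgeMulHom_cycleRotation_iff hk).1 x.2 p).1).symm
  right_inv _ := rfl

theorem cyclesToricSet_eq_image_range (K : Type) [Field K] (k m : ℕ) :
    cyclesToricSet K k m =
      (fun u p => ((u p : Kˣ) : K)) '' Set.range (edgeMulHom (G := Kˣ) (cycleRotation k m)) := by
  ext y
  constructor
  · rintro ⟨x, hx, hy⟩
    obtain rfl : y = _ := funext hy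
    exact ⟨_, ⟨fun p => Units.mk0 (x p) (hx p), rfl⟩, rfl⟩
  · rintro ⟨-, ⟨u, rfl⟩, rfl⟩
    exact ⟨fun p => u p, fun p => (u p).ne_zero, fun p => rfl⟩

theorem ncard_cyclesToricSet (K : Type) [Field K] (k m : ℕ) :
    (cyclesToricSet K k m).ncard = Nat.card (edgeMulHom (G := Kˣ) (cycleRotation k m)).range := by
  rw [cyclesToricSet_eq_image_range, Set.ncard_image_of_injective _
    fun a b h => funext fun p => Units.ext (congrFun h p), ← MonoidHom.coe_range]
  exact (Nat.card_coe_set_eq _).symm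

theorem card_cyclesToricSet_general (q k m : ℕ) (hk : Odd k)
    (K : Type) [Field K] [Fintype K] (hq : Fintype.card K = q) :
    (cyclesToricSet K k m).ncard =
      if 2 ∣ q - 1 then (q - 1) ^ (k * m) / 2 ^ m else (q - 1) ^ (k * m) := by
  classical
  have : NeZero k := ⟨hk.pos.ne'⟩
  set f := edgeMulHom (G := Kˣ) (cycleRotation k m)
  have hunits : Nat.card Kˣ = q - 1 := by
    rw [Nat.card_eq_fintype_card, Fintype.card_units, hq]
  have hcard : Nat.card f.ker * Nat.card f.range = (q - 1) ^ (k * m) := by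
    rw [← Subgroup.index_ker, Subgroup.card_mul_index, Nat.card_fun, hunits]
    simp [mul_comm]
  have hker : Nat.card f.ker = (q - 1).gcd 2 ^ m := by
    rw [Nat.card_congr (kerEdgeMulHomCycleRotationEquiv Kˣ m hk), Nat.card_fun,
      IsCyclic.card_powMonoidHom_ker, hunits, Nat.card_fin]
  rw [ncard_cyclesToricSet, ← hcard, hker]
  split_ifs with h2
  · rw [Nat.gcd_eq_right h2, Nat.mul_div_cancel_left _ (by positivity)]
  · rw [Nat.coprime_two_right.mpr (Nat.odd_iff.mpr (Nat.two_dvd_ne_zero.mp h2)), one_pow, one_mul]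

/-- Let `K = 𝔽_q` and let `G` be a graph with `m` connected components,
each an odd cycle of length `k`. Then `|X*_G| = (q−1)^(km)` if `2 ∤ q−1`, and
`|X*_G| = (q−1)^(km)/2^m` if `2 ∣ q−1`. -/
theorem card_cyclesToricSet (q k m : ℕ) (hk : Odd k) (hk3 : 3 ≤ k) (hm : 1 ≤ m)
    (K : Type) [Field K] [Fintype K] (hq : Fintype.card K = q) :
    (cyclesToricSet K k m).ncard =
      if 2 ∣ q - 1 then (q - 1) ^ (k * m) / 2 ^ m else (q - 1) ^ (k * m) :=
  card_cyclesToricSet_general q k m hk K hq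
end

section
/- For each i ∈ {1,…,m}, every binomial in the set A_i vanishes at every point of X*_𝒢; that is, A_i ⊆ I(X*_𝒢). -/
open MvPolynomial

/-- The set `A_i` of binomials attached to the `i`-th cycle:
`t_{α₁}^{(q−1)/2} ⋯ t_{α_γ}^{(q−1)/2} − t_{w₁}^{(q−1)/2} ⋯ t_{w_{γ+1}}^{(q−1)/2}`,
where `{α₁,…,α_γ}` runs over the `γ`-element subsets of the indices of the `i`-th block and
`{w₁,…,w_{γ+1}}` is its complement inside that block. -/
def cycleBinomials (K : Type) [Field K] (q k m γ : ℕ) (i : Fin m) :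
    Set (MvPolynomial (Fin m × Fin k) K) :=
  {f | ∃ s : Finset (Fin k), s.card = γ ∧
    f = (∏ α ∈ s, X ((i, α) : Fin m × Fin k) ^ ((q - 1) / 2)) -
        ∏ w ∈ sᶜ, X ((i, w) : Fin m × Fin k) ^ ((q - 1) / 2)}

/-!
Write `d = (q - 1) / 2`. Every nonzero `a ∈ 𝔽_q` satisfies `(a ^ d) ^ 2 = a ^ (q - 1) = 1`.
On a point `y = (x_j x_{j+1})_j` of a cycle, the product of all coordinates is `(∏ x_j) ^ 2`,
so the product of all the `y_j ^ d` is `1` as well. The two monomials of a binomial in `A_i`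
are complementary subproducts of this product, hence inverse to each other; as each is also its
own inverse, they agree.
-/

theorem FiniteField.pow_card_sub_one_div_two_sq {K : Type*} [Field K] [Fintype K]
    (hK : 2 ∣ Fintype.card K - 1) {a : K} (ha : a ≠ 0) :
    (a ^ ((Fintype.card K - 1) / 2)) ^ 2 = 1 := by
  rw [← pow_mul, Nat.div_mul_cancel hK, FiniteField.pow_card_sub_one_eq_one a ha]

theorem Finset.prod_eq_prod_compl_of_sq_eq_one {ι M : Type*} [Fintype ι] [DecidableEq ι]
    [CommMonoid M] {g : ι → M} (hsq : ∀ j, g j ^ 2 = 1) (hprod : ∏ j, g j = 1)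
    (s : Finset ι) : ∏ j ∈ s, g j = ∏ j ∈ sᶜ, g j := by
  refine left_inv_eq_right_inv ?_ (by rw [Finset.prod_mul_prod_compl, hprod])
  rw [← sq, ← Finset.prod_pow]
  exact Finset.prod_eq_one fun j _ => hsq j

theorem Equiv.Perm.prod_mul_comp_eq_sq {ι M : Type*} [Fintype ι] [CommMonoid M]
    (σ : Equiv.Perm ι) (f : ι → M) : ∏ j, f j * f (σ j) = (∏ j, f j) ^ 2 := by
  rw [Finset.prod_mul_distrib, Equiv.prod_comp σ f, sq]

theorem ne_zero_of_mem_cyclesToricSet {K : Type} [Field K] {k m : ℕ}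
    {y : Fin m × Fin k → K} (hy : y ∈ cyclesToricSet K k m) (p : Fin m × Fin k) : y p ≠ 0 := by
  obtain ⟨x, hx, hxy⟩ := hy
  rw [hxy p]
  exact mul_ne_zero (hx _) (hx _)

theorem exists_prod_cycle_eq_sq_of_mem_cyclesToricSet {K : Type} [Field K] {k m : ℕ}
    {y : Fin m × Fin k → K} (hy : y ∈ cyclesToricSet K k m) (i : Fin m) :
    ∃ c : K, c ≠ 0 ∧ ∏ j, y (i, j) = c ^ 2 := by
  obtain ⟨x, hx, hxy⟩ := hy
  obtain rfl : y = fun p => x p * x (p.1, finRotate k p.2) := funext hxy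
  exact ⟨∏ j, x (i, j), Finset.prod_ne_zero_iff.mpr fun j _ => hx _,
    (finRotate k).prod_mul_comp_eq_sq fun j => x (i, j)⟩

theorem cycleBinomials_subset_vanishingIdeal_general (q k m γ : ℕ) (K : Type) [Field K] [Fintype K]
    (hq : Fintype.card K = q) (hq2 : 2 ∣ q - 1) (i : Fin m) :
    cycleBinomials K q k m γ i ⊆
      (MvPolynomial.vanishingIdeal K (cyclesToricSet K k m) : Set (MvPolynomial (Fin m × Fin k) K)) := by
  subst hq
  rintro f ⟨s, -, rfl⟩
  rw [SetLike.mem_coe, mem_vanishingIdeal_iff]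
  intro y hy
  obtain ⟨c, hc, hyc⟩ := exists_prod_cycle_eq_sq_of_mem_cyclesToricSet hy i
  have hprod : ∏ j, y (i, j) ^ ((Fintype.card K - 1) / 2) = 1 := by
    rw [Finset.prod_pow, hyc, ← pow_mul, mul_comm, pow_mul]
    exact FiniteField.pow_card_sub_one_div_two_sq hq2 hc
  simp only [map_sub, map_prod, map_pow, aeval_X]
  rw [Finset.prod_eq_prod_compl_of_sq_eq_one
    (fun j => FiniteField.pow_card_sub_one_div_two_sq hq2 (ne_zero_of_mem_cyclesToricSet hy (i, j))) hprod s, sub_self]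

/-- For each `i`, every binomial in `A_i` vanishes on `X*_G`, i.e.
`A_i ⊆ I(X*_G)`. -/
theorem cycleBinomials_subset_vanishingIdeal (q k m γ : ℕ) (hγ : 1 ≤ γ) (hk : k = 2 * γ + 1)
    (hm : 1 ≤ m) (K : Type) [Field K] [Fintype K] (hq : Fintype.card K = q)
    (hq2 : 2 ∣ q - 1) (i : Fin m) :
    cycleBinomials K q k m γ i ⊆
      (MvPolynomial.vanishingIdeal K (cyclesToricSet K k m) : Set (MvPolynomial (Fin m × Fin k) K)) :=
  cycleBinomials_subset_vanishingIdeal_general q k m γ K hq hq2 i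
end

section
/- If f ∈ I(X*_𝒢), then f(a_1^2,…,a_{km}^2) = 0 for every (a_1,…,a_{km}) ∈ (K*)^{km}; equivalently, the point (a_1^2,…,a_{km}^2) belongs to X*_𝒢 for every (a_1,…,a_{km}) ∈ (K*)^{km}. -/
open MvPolynomial

section OddCycle

variable {G : Type*} [CommGroup G] {n : ℕ}

def cycleAltProd (b : Fin (n + 1) → G) (j : Fin (n + 1)) : G :=
  ∏ i : Fin (n + 1), b (j + i) ^ (-1 : ℤ) ^ (i : ℕ)

theorem cycleAltProd_mul_cycleAltProd_add_one (hn : Even n) (b : Fin (n + 1) → G)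
    (j : Fin (n + 1)) : cycleAltProd b j * cycleAltProd b (j + 1) = b j ^ 2 := by
  set P := ∏ i : Fin n, b (j + 1 + i.castSucc) ^ (-1 : ℤ) ^ (i : ℕ)
  have hfirst : cycleAltProd b j = b j * P⁻¹ := by
    rw [cycleAltProd, Fin.prod_univ_succ, ← Finset.prod_inv_distrib]
    congr 1
    · simp
    · refine Finset.prod_congr rfl fun i _ => ?_
      rw [Fin.val_succ, pow_succ, mul_neg_one, zpow_neg, ← Fin.coeSucc_eq_succ, add_comm i.castSucc 1, add_assoc]
  have hsecond : cycleAltProd b (j + 1) = P * b j := by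
    rw [cycleAltProd, Fin.prod_univ_castSucc]
    simp only [Fin.val_castSucc, Fin.val_last, hn.neg_one_pow, zpow_one]
    rw [add_assoc, add_comm 1, Fin.last_add_one, add_zero]
  rw [hfirst, hsecond, sq, mul_assoc, inv_mul_cancel_left]

end OddCycle

theorem squares_mem_cyclesToricSet_general (k m : ℕ) (hk : Odd k)
    (K : Type) [Field K]
    (a : Fin m × Fin k → K) (ha : ∀ p, a p ≠ 0) :
    (fun p => a p ^ 2) ∈ cyclesToricSet K k m ∧
      ∀ f ∈ MvPolynomial.vanishingIdeal K (cyclesToricSet K k m),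
        MvPolynomial.eval (fun p => a p ^ 2) f = 0 := by
  obtain ⟨c, rfl⟩ := hk
  let u : Fin m × Fin (2 * c + 1) → Kˣ := fun p => Units.mk0 (a p) (ha p)
  have hmem : (fun p => a p ^ 2) ∈ cyclesToricSet K (2 * c + 1) m := by
    refine ⟨fun p => ((cycleAltProd (fun j => u (p.1, j)) p.2 : Kˣ) : K), fun p => Units.ne_zero _,
      fun p => ?_⟩
    rw [finRotate_apply, ← Units.val_mul,
      cycleAltProd_mul_cycleAltProd_add_one (even_two_mul c)]
    simp [u]
  exact ⟨hmem, fun f hf => mem_vanishingIdeal_iff.mp hf _ hmem⟩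

/-- If `f ∈ I(X*_G)` then `f(a₁²,…,a_{km}²) = 0` for every tuple of nonzero
`a_i`; equivalently, the point `(a₁²,…,a_{km}²)` belongs to `X*_G` for every such tuple. -/
theorem squares_mem_cyclesToricSet (q k m : ℕ) (hk : Odd k) (hk3 : 3 ≤ k) (hm : 1 ≤ m)
    (K : Type) [Field K] [Fintype K] (hq : Fintype.card K = q)
    (a : Fin m × Fin k → K) (ha : ∀ p, a p ≠ 0) :
    (fun p => a p ^ 2) ∈ cyclesToricSet K k m ∧
      ∀ f ∈ MvPolynomial.vanishingIdeal K (cyclesToricSet K k m),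
        MvPolynomial.eval (fun p => a p ^ 2) f = 0 :=
  squares_mem_cyclesToricSet_general k m hk K a ha
end

section
/- Let f = t^a − t^b be a nonzero binomial in I(X*_C) with supp(a) ∩ supp(b) = ∅, such that the degree of f in each variable t_i is strictly less than q−1. If ∅ ≠ supp(a) ⊊ {1,…,k}, then supp(b) ≠ ∅. -/
/-!
If `b = 0`, then `t^a - 1` vanishes on `X*_C`. Evaluating at the point with `x_j = g` a
generator of `K*` and all other `x_i = 1` gives `g^(a_{j-1} + a_j) = 1`, so
`q - 1 ∣ a_{j-1} + a_j`. As every `a_i < q - 1`, a zero of `a` forces a zero at the next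
vertex, and going around the cycle `a = 0`, contradicting `supp(a) ≠ ∅`.
-/

open MvPolynomial

/-- The affine algebraic toric set parameterized by a cycle of length `k`:
`X*_C = {(x₁x₂, x₂x₃, …, x_{k−1}x_k, x_kx₁) : x_j ∈ K*} ⊆ K^k`. -/
def cycleToricSet (K : Type) [Field K] (k : ℕ) : Set (Fin k → K) :=
  {y | ∃ x : Fin k → K, (∀ j, x j ≠ 0) ∧ ∀ j : Fin k, y j = x j * x (finRotate k j)}

theorem Finset.prod_mul_perm_pow {ι M : Type*} [Fintype ι] [CommMonoid M]
    (σ : Equiv.Perm ι) (x : ι → M) (a : ι → ℕ) :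
    ∏ i, (x i * x (σ i)) ^ a i = ∏ i, x i ^ (a i + a (σ.symm i)) := by
  simp only [mul_pow, pow_add, Finset.prod_mul_distrib]
  congr 1
  simpa using Equiv.prod_comp σ fun i ↦ x i ^ a (σ.symm i)

theorem Equiv.Perm.SameCycle.of_forall_imp_apply {α : Type*} [Finite α] {f : Equiv.Perm α}
    {p : α → Prop} (hp : ∀ x, p x → p (f x)) {x y : α} (h : f.SameCycle x y) (hx : p x) :
    p y := by
  obtain ⟨n, -, -, rfl⟩ := h.exists_nat_pow_eq
  clear h
  induction n with
  | zero => exact hx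
  | succ n ih => rw [pow_succ', Equiv.Perm.mul_apply]; exact hp _ ih

theorem sameCycle_finRotate {k : ℕ} (i j : Fin k) : (finRotate k).SameCycle i j := by
  rcases le_or_gt 2 k with hk | hk
  · have hsupp := support_finRotate_of_le hk
    exact (isCycle_finRotate_of_le hk).sameCycle
      (Equiv.Perm.mem_support.mp (hsupp ▸ Finset.mem_univ i))
      (Equiv.Perm.mem_support.mp (hsupp ▸ Finset.mem_univ j))
  · have : Subsingleton (Fin k) := Fin.subsingleton_iff_le_one.mpr (by omega)
    exact Subsingleton.elim i j ▸ Equiv.Perm.SameCycle.refl _ _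

section CycleToricSet

variable {K : Type} [Field K] {k : ℕ} {a b : Fin k →₀ ℕ}

theorem prod_pow_add_eq_of_mem_vanishingIdeal
    (h : monomial a (1 : K) - monomial b 1 ∈ vanishingIdeal K (cycleToricSet K k))
    (x : Fin k → Kˣ) :
    ∏ i, x i ^ (a i + a ((finRotate k).symm i)) = ∏ i, x i ^ (b i + b ((finRotate k).symm i)) := by
  have hx := h (fun i ↦ x i * x (finRotate k i)) ⟨fun i ↦ x i, fun i ↦ (x i).ne_zero, fun _ ↦ rfl⟩
  rw [map_sub, aeval_monomial, aeval_monomial, sub_eq_zero, map_one, one_mul, one_mul,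
    Finsupp.prod_fintype _ _ fun _ ↦ pow_zero _, Finsupp.prod_fintype _ _ fun _ ↦ pow_zero _,
    Finset.prod_mul_perm_pow, Finset.prod_mul_perm_pow] at hx
  exact Units.ext (by push_cast; exact hx)

theorem add_rotate_modEq_of_mem_vanishingIdeal [Fintype K]
    (h : monomial a (1 : K) - monomial b 1 ∈ vanishingIdeal K (cycleToricSet K k)) (j : Fin k) :
    a j + a ((finRotate k).symm j) ≡ b j + b ((finRotate k).symm j) [MOD Fintype.card K - 1] := by
  classical
  obtain ⟨g, hg⟩ := IsCyclic.exists_generator (α := Kˣ)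
  rw [← Fintype.card_units, ← Nat.card_eq_fintype_card, ← orderOf_eq_card_of_forall_mem_zpowers hg,
    ← pow_eq_pow_iff_modEq]
  simpa [Pi.mulSingle_apply] using prod_pow_add_eq_of_mem_vanishingIdeal h (Pi.mulSingle j g)

end CycleToricSet

theorem support_b_nonempty_general (q k : ℕ)
    (K : Type) [Field K] [Fintype K] (hq : Fintype.card K = q)
    (a b : Fin k →₀ ℕ)
    (f : MvPolynomial (Fin k) K)
    (hf : f = (monomial a (1 : K)) - monomial b 1)
    (hmem : f ∈ MvPolynomial.vanishingIdeal K (cycleToricSet K k))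
    (hdeg : ∀ i : Fin k, MvPolynomial.degreeOf i f < q - 1)
    (hane : a.support.Nonempty)
    (haproper : a.support ⊂ Finset.univ) :
    b.support.Nonempty := by
  by_contra hb
  rw [Finset.not_nonempty_iff_eq_empty, Finsupp.support_eq_empty] at hb
  subst hb hf hq
  obtain ⟨i₀, -, hi₀⟩ := Finset.exists_of_ssubset haproper
  obtain ⟨j, hj⟩ := hane
  have ha_lt (i : Fin k) : a i < Fintype.card K - 1 := by
    refine lt_of_le_of_lt (monomial_le_degreeOf i ?_) (hdeg i)
    rw [mem_support_iff, coeff_sub, coeff_monomial, coeff_monomial, if_pos rfl,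
      if_neg (by rintro rfl; simp at hj)]
    simp
  have ha_succ (i : Fin k) (hi : a i = 0) : a (finRotate k i) = 0 := by
    have hmod := add_rotate_modEq_of_mem_vanishingIdeal hmem (finRotate k i)
    simp only [Equiv.symm_apply_apply, hi, add_zero, Finsupp.coe_zero, Pi.zero_apply] at hmod
    exact Nat.eq_zero_of_dvd_of_lt ((Nat.modEq_zero_iff_dvd).mp hmod) (ha_lt _)
  exact Finsupp.mem_support_iff.mp hj <| (sameCycle_finRotate i₀ j).of_forall_imp_apply ha_succ
    (Finsupp.notMem_support_iff.mp hi₀)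

/-- Let `f = t^a − t^b` be a nonzero binomial in `I(X*_C)` with
`supp(a) ∩ supp(b) = ∅` whose degree in each variable is strictly less than `q−1`.
If `∅ ≠ supp(a) ⊊ {1,…,k}`, then `supp(b) ≠ ∅`. -/
theorem support_b_nonempty (q k γ : ℕ) (hγ : 1 ≤ γ) (hk : k = 2 * γ + 1)
    (K : Type) [Field K] [Fintype K] (hq : Fintype.card K = q) (hq2 : 2 ∣ q - 1)
    (a b : Fin k →₀ ℕ) (hdisj : Disjoint a.support b.support)
    (f : MvPolynomial (Fin k) K)
    (hf : f = (monomial a (1 : K)) - monomial b 1)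
    (hf0 : f ≠ 0)
    (hmem : f ∈ MvPolynomial.vanishingIdeal K (cycleToricSet K k))
    (hdeg : ∀ i : Fin k, MvPolynomial.degreeOf i f < q - 1)
    (hane : a.support.Nonempty)
    (haproper : a.support ⊂ Finset.univ) :
    b.support.Nonempty :=
  support_b_nonempty_general q k K hq a b f hf hmem hdeg hane haproper
end

section
/- Let f = t^a − t^b be a nonzero binomial in I(X*_C) with supp(a) ∩ supp(b) = ∅, such that the degree of f in each variable t_i is strictly less than q−1. Then supp(a) ∪ supp(b) = {1,…,k}. -/
open MvPolynomial

/-!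
Evaluating `t^a - t^b` at the point of `X*_C` given by `x_{i+1} = ω`, a generator of `K*`, and
`x_j = 1` otherwise gives `ω^(a_i + a_{i+1}) = ω^(b_i + b_{i+1})`, i.e.
`a_i + a_{i+1} ≡ b_i + b_{i+1} (mod q - 1)`. If `i` lies outside both supports, this says
`a_{i+1} ≡ b_{i+1}`; both are below `q - 1`, so they are equal, hence both zero by disjointness.
Going around the cycle, `a = b = 0`, contradicting `f ≠ 0`.
-/

theorem FiniteField.exists_pow_eq_pow_iff_modEq (K : Type*) [Field K] [Fintype K] :
    ∃ g : K, g ≠ 0 ∧ ∀ m n : ℕ, g ^ m = g ^ n ↔ m ≡ n [MOD Fintype.card K - 1] := by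
  classical
  obtain ⟨u, hu⟩ := IsCyclic.exists_generator (α := Kˣ)
  refine ⟨u, u.ne_zero, fun m n => ?_⟩
  rw [← Units.val_pow_eq_pow_val, ← Units.val_pow_eq_pow_val, Units.val_inj,
    pow_eq_pow_iff_modEq, orderOf_eq_card_of_forall_mem_zpowers hu, Nat.card_eq_fintype_card,
    Fintype.card_units]

theorem Finset.prod_mul_apply_perm_pow {ι M : Type*} [Fintype ι] [CommMonoid M]
    (σ : Equiv.Perm ι) (x : ι → M) (c : ι → ℕ) :
    ∏ j, (x j * x (σ j)) ^ c j = ∏ j, x j ^ (c j + c (σ.symm j)) := by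
  simp only [mul_pow, Finset.prod_mul_distrib, pow_add]
  congr 1
  rw [← Equiv.prod_comp σ fun j => x j ^ c (σ.symm j)]
  simp

theorem Fintype.prod_mulSingle_pow {ι M : Type*} [Fintype ι] [DecidableEq ι] [CommMonoid M]
    (p : ι) (g : M) (c : ι → ℕ) : ∏ j, Pi.mulSingle p g j ^ c j = g ^ c p := by
  rw [Fintype.prod_eq_single p fun j hj => by simp [hj]]
  simp

theorem Finsupp.apply_eq_zero_of_disjoint_support {ι M : Type*} [Zero M] {a b : ι →₀ M}
    (h : Disjoint a.support b.support) {i : ι} (hi : a i = b i) : a i = 0 := by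
  by_contra hne
  exact Finset.disjoint_left.1 h (mem_support_iff.2 hne) (mem_support_iff.2 (hi ▸ hne))

theorem MvPolynomial.le_degreeOf_monomial_sub_monomial {σ R : Type*} [CommRing R] [Nontrivial R]
    {a b : σ →₀ ℕ} (hab : a ≠ b) (i : σ) :
    a i ≤ degreeOf i (monomial a (1 : R) - monomial b 1) ∧
      b i ≤ degreeOf i (monomial a (1 : R) - monomial b 1) := by
  classical
  exact ⟨monomial_le_degreeOf i (by simp [coeff_monomial, hab.symm]),
    monomial_le_degreeOf i (by simp [coeff_monomial, hab])⟩

open Fin.NatCast in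
theorem Fin.forall_of_finRotate_closed {k : ℕ} {P : Fin k → Prop}
    (hP : ∀ i, P i → P (finRotate k i)) {j : Fin k} (hj : P j) (i : Fin k) : P i := by
  cases k with
  | zero => exact j.elim0
  | succ n =>
    have hiter : ∀ m : ℕ, P (j + (m : Fin (n + 1))) := by
      intro m
      induction m with
      | zero => simpa using hj
      | succ m ih => simpa [← add_assoc] using hP _ ih
    simpa using hiter (i - j).val

theorem modEq_of_monomial_sub_mem_vanishingIdeal_cycleToricSet {K : Type} [Field K] [Fintype K]
    {k : ℕ} {a b : Fin k →₀ ℕ}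
    (h : monomial a (1 : K) - monomial b 1 ∈ vanishingIdeal K (cycleToricSet K k)) (i : Fin k) :
    a i + a (finRotate k i) ≡ b i + b (finRotate k i) [MOD Fintype.card K - 1] := by
  classical
  obtain ⟨g, hg0, hg⟩ := FiniteField.exists_pow_eq_pow_iff_modEq K
  set x : Fin k → K := Pi.mulSingle (finRotate k i) g
  have hx : ∀ j, x j ≠ 0 := fun j => by
    by_cases hj : j = finRotate k i
    · simp only [x, hj, Pi.mulSingle_eq_same, ne_eq, hg0, not_false_eq_true]
    · simp only [x, Pi.mulSingle_eq_of_ne hj, ne_eq, one_ne_zero, not_false_eq_true]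
  have hy : (fun j => x j * x (finRotate k j)) ∈ cycleToricSet K k := ⟨x, hx, fun _ => rfl⟩
  have hval := h _ hy
  rw [map_sub, sub_eq_zero, aeval_monomial, aeval_monomial] at hval
  simp only [map_one, one_mul, Finsupp.prod_pow, Finset.prod_mul_apply_perm_pow,
    Fintype.prod_mulSingle_pow, Equiv.symm_apply_apply, x] at hval
  rw [hg] at hval
  rwa [add_comm (a i), add_comm (b i)]

theorem support_union_eq_univ_general (q k : ℕ)
    (K : Type) [Field K] [Fintype K] (hq : Fintype.card K = q)
    (a b : Fin k →₀ ℕ) (hdisj : Disjoint a.support b.support)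
    (f : MvPolynomial (Fin k) K)
    (hf : f = (monomial a (1 : K)) - monomial b 1)
    (hf0 : f ≠ 0)
    (hmem : f ∈ MvPolynomial.vanishingIdeal K (cycleToricSet K k))
    (hdeg : ∀ i : Fin k, MvPolynomial.degreeOf i f < q - 1) :
    a.support ∪ b.support = Finset.univ := by
  subst hf hq
  have hab : a ≠ b := by rintro rfl; exact hf0 (sub_self _)
  have hdeg' := le_degreeOf_monomial_sub_monomial (R := K) hab
  have hstep : ∀ i, a i = 0 ∧ b i = 0 → a (finRotate k i) = 0 ∧ b (finRotate k i) = 0 := by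
    rintro i ⟨hai, hbi⟩
    have hcong := modEq_of_monomial_sub_mem_vanishingIdeal_cycleToricSet hmem i
    rw [hai, hbi, zero_add, zero_add] at hcong
    have heq := hcong.eq_of_lt_of_lt ((hdeg' _).1.trans_lt (hdeg _))
      ((hdeg' _).2.trans_lt (hdeg _))
    have ha := Finsupp.apply_eq_zero_of_disjoint_support hdisj heq
    exact ⟨ha, heq ▸ ha⟩
  refine Finset.eq_univ_of_forall fun j => ?_
  by_contra hj
  simp only [Finset.mem_union, Finsupp.mem_support_iff, not_or, not_not] at hj
  refine hab (Finsupp.ext fun i => ?_)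
  obtain ⟨hai, hbi⟩ := Fin.forall_of_finRotate_closed hstep hj i
  rw [hai, hbi]

/-- Let `f = t^a − t^b` be a nonzero binomial in `I(X*_C)` with
`supp(a) ∩ supp(b) = ∅` whose degree in each variable is strictly less than `q−1`.
Then `supp(a) ∪ supp(b) = {1,…,k}`. -/
theorem support_union_eq_univ (q k γ : ℕ) (hγ : 1 ≤ γ) (hk : k = 2 * γ + 1)
    (K : Type) [Field K] [Fintype K] (hq : Fintype.card K = q) (hq2 : 2 ∣ q - 1)
    (a b : Fin k →₀ ℕ) (hdisj : Disjoint a.support b.support)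
    (f : MvPolynomial (Fin k) K)
    (hf : f = (monomial a (1 : K)) - monomial b 1)
    (hf0 : f ≠ 0)
    (hmem : f ∈ MvPolynomial.vanishingIdeal K (cycleToricSet K k))
    (hdeg : ∀ i : Fin k, MvPolynomial.degreeOf i f < q - 1) :
    a.support ∪ b.support = Finset.univ :=
  support_union_eq_univ_general q k K hq a b hdisj f hf hf0 hmem hdeg
end

section
/- Fix i ∈ {1,…,m} and let f = t^a − t^b be a binomial in the variables t_{(i−1)k+1},…,t_{ik} with supp(a) ∩ supp(b) = ∅, such that every nonzero coordinate of a and of b equals (q−1)/2, both supp(a) and supp(b) are nonempty, and supp(a) ∪ supp(b) = {(i−1)k+1,…,ik}. Then f belongs to the ideal J of K[t_1,…,t_{km}] generated by {t_i^{q−1}−1 : 1 ≤ i ≤ km} together with A_1 ∪ ⋯ ∪ A_m. -/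
open MvPolynomial

/-- The ideal `J` generated by `t_p^{q−1} − 1` for all variables `p` together with the
binomials in `A₁ ∪ ⋯ ∪ A_m`. -/
noncomputable def cyclesIdeal (K : Type) [Field K] (q k m γ : ℕ) : Ideal (MvPolynomial (Fin m × Fin k) K) :=
  Ideal.span
    ({p : MvPolynomial (Fin m × Fin k) K | ∃ j : Fin m × Fin k, p = X j ^ (q - 1) - 1} ∪
      ⋃ i : Fin m, cycleBinomials K q k m γ i)

/-!
Modulo `J` every `y_p = t_p^{(q-1)/2}` squares to `1`. A binomial of `A_i` says that the product
of the `y_p` over a `γ`-subset of the `i`-th block equals the product over its complement, so the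
product over the whole block is a square of such products, hence `1`. Since `supp a ⊔ supp b` is
the block, `t^a t^b ≡ 1`, and `t^b` is its own inverse, so `t^a ≡ t^b`.
-/

section Involutions

variable {ι M : Type*} [CommMonoid M] {y : ι → M}

theorem Finset.prod_sq_eq_one_of_forall_sq_eq_one (hy : ∀ i, y i ^ 2 = 1) (s : Finset ι) :
    (∏ i ∈ s, y i) ^ 2 = 1 := by
  rw [← Finset.prod_pow]
  exact Finset.prod_eq_one fun i _ => hy i

theorem Finset.prod_univ_eq_one_of_prod_eq_prod_compl [Fintype ι] [DecidableEq ι]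
    (hy : ∀ i, y i ^ 2 = 1) {s : Finset ι} (hs : ∏ i ∈ s, y i = ∏ i ∈ sᶜ, y i) :
    ∏ i, y i = 1 := by
  rw [← Finset.prod_mul_prod_compl s, hs, ← sq]
  exact Finset.prod_sq_eq_one_of_forall_sq_eq_one hy sᶜ

end Involutions

theorem MvPolynomial.monomial_one_eq_prod_X_pow {σ R : Type*} [CommSemiring R] {c : σ →₀ ℕ}
    {n : ℕ} (hc : ∀ p ∈ c.support, c p = n) :
    monomial c (1 : R) = ∏ p ∈ c.support, X p ^ n := by
  rw [monomial_eq, C_1, one_mul, Finsupp.prod]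
  exact Finset.prod_congr rfl fun p hp => by rw [hc p hp]

namespace cyclesIdeal

variable {K : Type} [Field K] {q k m γ : ℕ}

local notation "J" => cyclesIdeal K q k m γ

theorem X_pow_sub_one_mem (p : Fin m × Fin k) : X p ^ (q - 1) - 1 ∈ J :=
  Ideal.subset_span (Or.inl ⟨p, rfl⟩)

theorem cycleBinomials_subset (i : Fin m) : cycleBinomials K q k m γ i ⊆ J :=
  fun _ hf => Ideal.subset_span (Or.inr (Set.mem_iUnion.mpr ⟨i, hf⟩))

theorem mk_X_pow_half_sq (hq2 : 2 ∣ q - 1) (p : Fin m × Fin k) :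
    Ideal.Quotient.mk J (X p ^ ((q - 1) / 2)) ^ 2 = 1 := by
  rw [← map_pow, ← pow_mul, Nat.div_mul_cancel hq2, ← sub_eq_zero, ← map_one (Ideal.Quotient.mk J),
    ← map_sub, Ideal.Quotient.eq_zero_iff_mem]
  exact X_pow_sub_one_mem p

theorem prod_block_mk_X_pow_half (hq2 : 2 ∣ q - 1) (hγk : γ ≤ k) (i : Fin m) :
    ∏ α : Fin k, Ideal.Quotient.mk J (X (i, α) ^ ((q - 1) / 2)) = 1 := by
  obtain ⟨s, -, hs⟩ := Finset.exists_subset_card_eq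
    (show γ ≤ (Finset.univ : Finset (Fin k)).card by simpa using hγk)
  refine Finset.prod_univ_eq_one_of_prod_eq_prod_compl (fun α => mk_X_pow_half_sq hq2 _)
    (s := s) ?_
  simp only [← map_prod]
  exact Ideal.Quotient.eq.mpr (cycleBinomials_subset i ⟨s, hs, rfl⟩)

end cyclesIdeal

theorem block_binomial_mem_cyclesIdeal_general (q k m γ : ℕ) (hk : k = 2 * γ + 1)
    (K : Type) [Field K] (hq2 : 2 ∣ q - 1)
    (i : Fin m) (a b : Fin m × Fin k →₀ ℕ)
    (hdisj : Disjoint a.support b.support)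
    (haval : ∀ p ∈ a.support, a p = (q - 1) / 2)
    (hbval : ∀ p ∈ b.support, b p = (q - 1) / 2)
    (hunion : a.support ∪ b.support = {i} ×ˢ (Finset.univ : Finset (Fin k))) :
    (monomial a (1 : K)) - monomial b 1 ∈ cyclesIdeal K q k m γ := by
  set φ := Ideal.Quotient.mk (cyclesIdeal K q k m γ)
  have hmk : ∀ c : Fin m × Fin k →₀ ℕ, (∀ p ∈ c.support, c p = (q - 1) / 2) →
      φ (monomial c 1) = ∏ p ∈ c.support, φ (X p ^ ((q - 1) / 2)) := fun c hc => by
    rw [monomial_one_eq_prod_X_pow hc, map_prod]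
  have hab : φ (monomial a 1) * φ (monomial b 1) = 1 := by
    rw [hmk a haval, hmk b hbval, ← Finset.prod_union hdisj, hunion, Finset.prod_product,
      Finset.prod_singleton, cyclesIdeal.prod_block_mk_X_pow_half hq2 (by omega)]
  have hbb : φ (monomial b 1) * φ (monomial b 1) = 1 := by
    rw [← sq, hmk b hbval]
    exact Finset.prod_sq_eq_one_of_forall_sq_eq_one (cyclesIdeal.mk_X_pow_half_sq hq2) _
  exact Ideal.Quotient.eq.mp (left_inv_eq_right_inv hab hbb)

/-- Fix `i` and let `f = t^a − t^b` be a binomial in the variables of the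
`i`-th block with disjoint supports, all of whose nonzero exponents equal `(q−1)/2`, with
both supports nonempty and `supp(a) ∪ supp(b)` equal to the whole `i`-th block.
Then `f ∈ J`. -/
theorem block_binomial_mem_cyclesIdeal (q k m γ : ℕ) (hγ : 1 ≤ γ) (hk : k = 2 * γ + 1)
    (hm : 1 ≤ m) (K : Type) [Field K] [Fintype K] (hq : Fintype.card K = q) (hq2 : 2 ∣ q - 1)
    (i : Fin m) (a b : Fin m × Fin k →₀ ℕ)
    (hablock : ∀ p ∈ a.support ∪ b.support, p.1 = i)
    (hdisj : Disjoint a.support b.support)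
    (haval : ∀ p ∈ a.support, a p = (q - 1) / 2)
    (hbval : ∀ p ∈ b.support, b p = (q - 1) / 2)
    (hane : a.support.Nonempty) (hbne : b.support.Nonempty)
    (hunion : a.support ∪ b.support = {i} ×ˢ (Finset.univ : Finset (Fin k))) :
    (monomial a (1 : K)) - monomial b 1 ∈ cyclesIdeal K q k m γ :=
  block_binomial_mem_cyclesIdeal_general q k m γ hk K hq2 i a b hdisj haval hbval hunion
end

section
/- Fix i ∈ {1,…,m}. The binomial f = t_{(i−1)k+1}^{(q−1)/2}⋯t_{ik}^{(q−1)/2} − 1 belongs to the ideal J of K[t_1,…,t_{km}] generated by {t_i^{q−1}−1 : 1 ≤ i ≤ km} together with A_1 ∪ ⋯ ∪ A_m. -/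
open MvPolynomial

/-! In the quotient by `J` every variable satisfies `t^{q−1} = 1`, and the two halves
`∏_{α ∈ s} t_α^{(q−1)/2}` and `∏_{w ∉ s} t_w^{(q−1)/2}` of the block product coincide for any
`γ`-subset `s` of the block. Hence the block product equals `(∏_{w ∉ s} t_w^{(q−1)/2})² =
∏_{w ∉ s} t_w^{q−1} = 1` there. -/

section IdealArithmetic

variable {R : Type*} [CommRing R] {I : Ideal R}

theorem Ideal.prod_sub_one_mem {ι : Type*} {s : Finset ι} {f : ι → R}
    (h : ∀ j ∈ s, f j - 1 ∈ I) : (∏ j ∈ s, f j) - 1 ∈ I := by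
  rw [← Ideal.Quotient.eq, map_prod, map_one]
  exact Finset.prod_eq_one fun j hj => Ideal.Quotient.eq.2 (h j hj)

theorem Ideal.mul_sub_one_mem_of_sub_mem {a b : R} (hab : a - b ∈ I) (hb : b ^ 2 - 1 ∈ I) :
    a * b - 1 ∈ I := by
  have hsplit : a * b - 1 = b * (a - b) + (b ^ 2 - 1) := by ring
  rw [hsplit]
  exact I.add_mem (I.mul_mem_left b hab) hb

end IdealArithmetic

section CyclesIdeal

variable {K : Type} [Field K] {q k m γ : ℕ}

theorem X_pow_sub_one_mem_cyclesIdeal (j : Fin m × Fin k) :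
    X j ^ (q - 1) - 1 ∈ cyclesIdeal K q k m γ :=
  Ideal.subset_span (Or.inl ⟨j, rfl⟩)

theorem cycleBinomial_mem_cyclesIdeal (i : Fin m) {s : Finset (Fin k)} (hs : s.card = γ) :
    (∏ α ∈ s, X ((i, α) : Fin m × Fin k) ^ ((q - 1) / 2)) -
        ∏ w ∈ sᶜ, X ((i, w) : Fin m × Fin k) ^ ((q - 1) / 2) ∈ cyclesIdeal K q k m γ :=
  Ideal.subset_span (Or.inr (Set.mem_iUnion.2 ⟨i, s, hs, rfl⟩))

end CyclesIdeal

theorem block_product_sub_one_mem_cyclesIdeal_general (q k m γ : ℕ) (hk : k = 2 * γ + 1)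
    (K : Type) [Field K] (hq2 : 2 ∣ q - 1)
    (i : Fin m) :
    (∏ j : Fin k, X ((i, j) : Fin m × Fin k) ^ ((q - 1) / 2)) - 1 ∈
      cyclesIdeal K q k m γ := by
  obtain ⟨s, -, hs⟩ := Finset.exists_subset_card_eq
    (show γ ≤ (Finset.univ : Finset (Fin k)).card by simp only [Finset.card_univ, Fintype.card_fin]; omega)
  have hsq : (∏ w ∈ sᶜ, X ((i, w) : Fin m × Fin k) ^ ((q - 1) / 2)) ^ 2 - 1 ∈
      cyclesIdeal K q k m γ := by
    rw [← Finset.prod_pow]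
    refine Ideal.prod_sub_one_mem fun w _ => ?_
    rw [← pow_mul, Nat.div_mul_cancel hq2]
    exact X_pow_sub_one_mem_cyclesIdeal _
  rw [← Finset.prod_mul_prod_compl s]
  exact Ideal.mul_sub_one_mem_of_sub_mem (cycleBinomial_mem_cyclesIdeal i hs) hsq

/-- Fix `i`. The binomial
`t_{(i−1)k+1}^{(q−1)/2} ⋯ t_{ik}^{(q−1)/2} − 1` (the product over all variables of the
`i`-th block) belongs to the ideal `J`. -/
theorem block_product_sub_one_mem_cyclesIdeal (q k m γ : ℕ) (hγ : 1 ≤ γ) (hk : k = 2 * γ + 1)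
    (hm : 1 ≤ m) (K : Type) [Field K] [Fintype K] (hq : Fintype.card K = q) (hq2 : 2 ∣ q - 1)
    (i : Fin m) :
    (∏ j : Fin k, X ((i, j) : Fin m × Fin k) ^ ((q - 1) / 2)) - 1 ∈
      cyclesIdeal K q k m γ :=
  block_product_sub_one_mem_cyclesIdeal_general q k m γ hk K hq2 i
end

section
/- Let 𝒢 be a graph with m connected components, each of which is a cycle of odd length k = 2γ+1. Then the vanishing ideal of X*_𝒢 equals the ideal of S = K[t_1,…,t_{km}] generated by the polynomials t_i^{q−1}−1 for 1 ≤ i ≤ km together with the binomials in A_1 ∪ ⋯ ∪ A_m; that is, I(X*_𝒢) = ⟨{t_i^{q−1}−1}_{i=1}^{km} ∪ (A_1 ∪ ⋯ ∪ A_m)⟩. -/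
/-!
A point of `K^{km}` satisfies the generators `t_i^{q-1} - 1` iff all its coordinates are nonzero,
and then the values `y_j^{(q-1)/2}` are `±1`, so the binomials of `A_i` all vanish iff
`(∏_{j in cycle i} y_j)^{(q-1)/2} = 1`, i.e. (Euler's criterion) iff that product is a square.
On an odd cycle, `y_j = x_j x_{j+1}` is solvable in `K*` exactly when `∏ y_j` is a square, so the
zero locus of the ideal is the toric set. Since the ideal contains the field equations
`t_i^q - t_i`, it equals the vanishing ideal of its zero locus: by the combinatorial
Nullstellensatz it contains every polynomial vanishing on all of `K^{km}`, and indicator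
polynomials then separate the points outside the zero locus.
-/

open MvPolynomial

open Finset

theorem Finset.prod_range_two_mul {M : Type*} [CommMonoid M] (f : ℕ → M) (t : ℕ) :
    ∏ i ∈ range (2 * t), f i = ∏ i ∈ range t, f (2 * i) * f (2 * i + 1) := by
  induction t with
  | zero => simp
  | succ t ih =>
    rw [mul_add_one, prod_range_succ, prod_range_succ, prod_range_succ, ih, mul_assoc]

theorem prod_mul_finRotate {M : Type*} [CommMonoid M] {n : ℕ} (x : Fin n → M) :
    ∏ j, x j * x (finRotate n j) = (∏ j, x j) ^ 2 := by
  rw [prod_mul_distrib, Equiv.prod_comp, sq]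

open Fin.NatCast in
theorem exists_eq_mul_finRotate_of_isSquare {G : Type*} [CommGroup G] {n : ℕ} (hn : Odd n)
    {Y : Fin n → G} (hY : IsSquare (∏ j, Y j)) :
    ∃ x : Fin n → G, ∀ j, Y j = x j * x (finRotate n j) := by
  obtain ⟨t, rfl⟩ := hn
  obtain ⟨c, hc⟩ := hY
  -- `x j = c / (Y (j + 1) * Y (j + 3) * ⋯ * Y (j + 2t - 1))`, so that `x j * x (j + 1)` is
  -- `c * c = ∏ Y` divided by the product of all `Y` but `Y j`.
  refine ⟨fun j => c * (∏ l ∈ range t, Y (j + (2 * l + 1 : ℕ)))⁻¹, fun j => ?_⟩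
  have hcycle : ∏ i ∈ range (2 * t + 1), Y (j + (i : ℕ)) = c * c := by
    rw [← hc, ← Fin.prod_univ_eq_prod_range (fun i => Y (j + (i : ℕ)))]
    simp only [Fin.cast_val_eq_self]
    exact Equiv.prod_comp (Equiv.addLeft j) Y
  rw [prod_range_succ', prod_range_two_mul, prod_mul_distrib] at hcycle
  simp only [Nat.cast_zero, add_zero] at hcycle
  have hshift (l : ℕ) :
      j + ((2 * l + 1 + 1 : ℕ) : Fin (2 * t + 1)) = j + 1 + (2 * l + 1 : ℕ) := by
    push_cast; abel
  simp only [hshift] at hcycle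
  rw [finRotate_apply, mul_mul_mul_comm, ← mul_inv, ← hcycle, mul_comm _ (Y j),
    mul_inv_cancel_right]

theorem FiniteField.exists_eq_mul_finRotate_iff {K : Type*} [Field K] [Fintype K]
    (hK : ringChar K ≠ 2) {n : ℕ} (hn : Odd n) (y : Fin n → K) :
    (∃ x : Fin n → K, (∀ j, x j ≠ 0) ∧ ∀ j, y j = x j * x (finRotate n j)) ↔
      (∀ j, y j ≠ 0) ∧ (∏ j, y j) ^ (Fintype.card K / 2) = 1 := by
  constructor
  · rintro ⟨x, hx0, hxy⟩
    have hy0 : ∀ j, y j ≠ 0 := fun j => hxy j ▸ mul_ne_zero (hx0 j) (hx0 _)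
    refine ⟨hy0, (FiniteField.isSquare_iff hK (prod_ne_zero_iff.mpr fun j _ => hy0 j)).mp
      ⟨∏ j, x j, ?_⟩⟩
    rw [prod_congr rfl fun j _ => hxy j, prod_mul_finRotate, sq]
  · rintro ⟨hy0, hpow⟩
    let Y : Fin n → Kˣ := fun j => Units.mk0 (y j) (hy0 j)
    have hsq : IsSquare (∏ j, Y j) := by
      rw [FiniteField.unit_isSquare_iff hK, Units.ext_iff]
      simpa [Y] using hpow
    obtain ⟨x, hx⟩ := exists_eq_mul_finRotate_of_isSquare hn hsq
    exact ⟨fun j => x j, fun j => (x j).ne_zero,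
      fun j => by simpa [Units.ext_iff, Y] using hx j⟩

theorem Finset.prod_eq_prod_compl_iff {M : Type*} [CommMonoid M] {ι : Type*} [Fintype ι]
    [DecidableEq ι] {e : ι → M} (he : ∀ i, e i ^ 2 = 1) (s : Finset ι) :
    ∏ i ∈ s, e i = ∏ i ∈ sᶜ, e i ↔ ∏ i, e i = 1 := by
  have hs : (∏ i ∈ s, e i) ^ 2 = 1 := by rw [← prod_pow]; exact prod_eq_one fun i _ => he i
  rw [← prod_mul_prod_compl s e]
  constructor
  · intro h
    rw [← h, ← sq, hs]
  · intro h
    calc ∏ i ∈ s, e i = (∏ i ∈ s, e i) * ((∏ i ∈ s, e i) * ∏ i ∈ sᶜ, e i) := by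
          rw [h, mul_one]
      _ = (∏ i ∈ s, e i) ^ 2 * ∏ i ∈ sᶜ, e i := by rw [sq, mul_assoc]
      _ = ∏ i ∈ sᶜ, e i := by rw [hs, one_mul]

theorem Finset.forall_card_eq_prod_eq_prod_compl_iff {M : Type*} [CommMonoid M] {ι : Type*}
    [Fintype ι] [DecidableEq ι] {e : ι → M} (he : ∀ i, e i ^ 2 = 1) {γ : ℕ}
    (hγ : γ ≤ Fintype.card ι) :
    (∀ s : Finset ι, #s = γ → ∏ i ∈ s, e i = ∏ i ∈ sᶜ, e i) ↔ ∏ i, e i = 1 := by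
  obtain ⟨s, -, hs⟩ :=
    exists_subset_card_eq (s := (univ : Finset ι)) (n := γ) (by rwa [card_univ])
  exact ⟨fun h => (prod_eq_prod_compl_iff he s).mp (h s hs),
    fun h t _ => (prod_eq_prod_compl_iff he t).mpr h⟩

namespace MvPolynomial

variable {σ K : Type*} [Field K] [Fintype K]

theorem prod_X_sub_C_eq_X_pow_card_sub_X (i : σ) :
    ∏ r : K, (X i - C r : MvPolynomial σ K) = X i ^ Fintype.card K - X i := by
  have hq := Fintype.one_lt_card (α := K)
  have hmonic : (Polynomial.X ^ Fintype.card K - Polynomial.X : Polynomial K).Monic :=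
    Polynomial.monic_X_pow_sub (by rw [Polynomial.degree_X]; exact_mod_cast hq)
  have h := Polynomial.prod_multiset_X_sub_C_of_monic_of_roots_card_eq hmonic
    (by rw [FiniteField.roots_X_pow_card_sub_X, FiniteField.X_pow_card_sub_X_natDegree_eq K hq]
        rfl)
  rw [FiniteField.roots_X_pow_card_sub_X] at h
  simpa [map_prod, algebraMap_eq] using congrArg (Polynomial.aeval (X i : MvPolynomial σ K)) h

variable [Finite σ]

theorem mem_of_forall_eval_eq_zero {J : Ideal (MvPolynomial σ K)}
    (hJ : ∀ i, X i ^ Fintype.card K - X i ∈ J) {f : MvPolynomial σ K}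
    (hf : ∀ a, eval a f = 0) : f ∈ J := by
  obtain ⟨h, -, rfl⟩ := combinatorial_nullstellensatz_exists_linearCombination
    (fun _ => univ) (fun _ => univ_nonempty) f (fun a _ => hf a)
  rw [Finsupp.linearCombination_apply]
  exact J.sum_mem fun i _ => J.smul_mem _ (prod_X_sub_C_eq_X_pow_card_sub_X (K := K) i ▸ hJ i)

theorem vanishingIdeal_zeroLocus_eq {J : Ideal (MvPolynomial σ K)}
    (hJ : ∀ i, X i ^ Fintype.card K - X i ∈ J) : vanishingIdeal K (zeroLocus K J) = J := by
  classical
  have := Fintype.ofFinite σ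
  refine le_antisymm (fun f hf => ?_) (le_vanishingIdeal_zeroLocus J)
  have hsep : ∀ a : σ → K, ∃ p ∈ J, a ∉ zeroLocus K J → eval a p = 1 := by
    intro a
    by_cases ha : a ∈ zeroLocus K J
    · exact ⟨0, J.zero_mem, absurd ha⟩
    · simp only [mem_zeroLocus_iff, not_forall] at ha
      obtain ⟨p, hp, hpa⟩ := ha
      refine ⟨C (eval a p)⁻¹ * p, J.mul_mem_left _ hp, fun _ => ?_⟩
      rw [map_mul, eval_C]
      exact inv_mul_cancel₀ hpa
  choose p hpJ hpa using hsep
  -- `g` takes the value `1` at every point outside the zero locus.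
  set g := ∑ a, p a * indicator a
  have hg : g ∈ J := J.sum_mem fun a _ => J.mul_mem_right _ (hpJ a)
  have heval : ∀ b, eval b g = eval b (p b) := by
    intro b
    rw [map_sum, sum_eq_single b
      (fun a _ hab => by simp [eval_indicator_apply_eq_zero b a (Ne.symm hab)]) (by simp)]
    simp [eval_indicator_apply_eq_one]
  have hfg : f - f * g ∈ J := by
    refine mem_of_forall_eval_eq_zero hJ fun b => ?_
    by_cases hb : b ∈ zeroLocus K J
    · simp [show eval b f = 0 from hf b hb]
    · simp [heval, hpa b hb]
  simpa using J.add_mem hfg (J.mul_mem_left f hg)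

end MvPolynomial

theorem mem_cyclesToricSet_iff {K : Type} [Field K] {k m : ℕ} {y : Fin m × Fin k → K} :
    y ∈ cyclesToricSet K k m ↔
      ∀ i, ∃ x : Fin k → K, (∀ j, x j ≠ 0) ∧
        ∀ j, y (i, j) = x j * x (finRotate k j) := by
  constructor
  · rintro ⟨x, hx0, hxy⟩ i
    exact ⟨fun j => x (i, j), fun j => hx0 (i, j), fun j => hxy (i, j)⟩
  · intro h
    choose x hx0 hxy using h
    exact ⟨fun p => x p.1 p.2, fun p => hx0 p.1 p.2, fun p => hxy p.1 p.2⟩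

theorem zeroLocus_span_eq_cyclesToricSet {K : Type} [Field K] [Fintype K] (hK : ringChar K ≠ 2)
    {k m γ : ℕ} (hk : k = 2 * γ + 1) :
    zeroLocus K (Ideal.span
      ({p : MvPolynomial (Fin m × Fin k) K | ∃ j, p = X j ^ (Fintype.card K - 1) - 1} ∪
        ⋃ i, cycleBinomials K (Fintype.card K) k m γ i)) = cyclesToricSet K k m := by
  set q := Fintype.card K
  have hq : q % 2 = 1 := FiniteField.odd_card_of_char_ne_two hK
  have hq1 : 1 < q := Fintype.one_lt_card
  have hodd : Odd k := hk ▸ odd_two_mul_add_one γ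
  have hγ : γ ≤ Fintype.card (Fin k) := by rw [Fintype.card_fin]; omega
  have hne : ∀ a : K, a ^ (q - 1) = 1 ↔ a ≠ 0 := fun a =>
    ⟨fun h h0 => by simp [h0, zero_pow (by omega : q - 1 ≠ 0)] at h,
      FiniteField.pow_card_sub_one_eq_one a⟩
  have hsq : ∀ a : K, a ≠ 0 → (a ^ (q / 2)) ^ 2 = 1 := fun a ha => by
    rw [← pow_mul, show q / 2 * 2 = q - 1 by omega, (hne a).mpr ha]
  ext y
  rw [zeroLocus_span, mem_cyclesToricSet_iff]
  simp only [cycleBinomials, show (q - 1) / 2 = q / 2 by omega, Set.mem_ofPred_eq, Set.mem_union,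
    Set.mem_iUnion, or_imp, forall_and, forall_exists_index, and_imp, forall_eq_apply_imp_iff,
    forall_comm (α := MvPolynomial _ _), map_sub, map_pow, map_prod, aeval_X, map_one, sub_eq_zero,
    hne, Prod.forall, FiniteField.exists_eq_mul_finRotate_iff hK hodd, ← prod_pow]
  exact and_congr_right fun hy0 => forall_congr' fun i =>
    forall_card_eq_prod_eq_prod_compl_iff (fun j => hsq _ (hy0 i j)) hγ

theorem vanishingIdeal_cyclesToricSet_general (q k m γ : ℕ) (hk : k = 2 * γ + 1)
    (K : Type) [Field K] [Fintype K] (hq : Fintype.card K = q) (hq2 : 2 ∣ q - 1) :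
    MvPolynomial.vanishingIdeal K (cyclesToricSet K k m) =
      Ideal.span
        ({p : MvPolynomial (Fin m × Fin k) K | ∃ j : Fin m × Fin k, p = X j ^ (q - 1) - 1} ∪
          ⋃ i : Fin m, cycleBinomials K q k m γ i) := by
  subst hq
  have hq1 : 1 < Fintype.card K := Fintype.one_lt_card
  have hK : ringChar K ≠ 2 := fun h => by
    have := FiniteField.even_card_of_char_two h
    omega
  rw [← zeroLocus_span_eq_cyclesToricSet hK hk, vanishingIdeal_zeroLocus_eq]
  intro j
  have hfactor : (X j ^ Fintype.card K - X j : MvPolynomial (Fin m × Fin k) K) =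
      X j * (X j ^ (Fintype.card K - 1) - 1) := by
    rw [mul_sub, mul_one, ← pow_succ', Nat.sub_add_cancel hq1.le]
  rw [hfactor]
  exact Ideal.mul_mem_left _ _ (Ideal.subset_span (Or.inl ⟨j, rfl⟩))

/-- Let `G` be a graph with `m` connected components, each an odd cycle of
length `k = 2γ+1`. Then
`I(X*_G) = ⟨{t_i^{q−1}−1}_{i=1}^{km} ∪ (A₁ ∪ ⋯ ∪ A_m)⟩`. -/
theorem vanishingIdeal_cyclesToricSet (q k m γ : ℕ) (hγ : 1 ≤ γ) (hk : k = 2 * γ + 1)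
    (hm : 1 ≤ m) (K : Type) [Field K] [Fintype K] (hq : Fintype.card K = q) (hq2 : 2 ∣ q - 1) :
    MvPolynomial.vanishingIdeal K (cyclesToricSet K k m) =
      Ideal.span
        ({p : MvPolynomial (Fin m × Fin k) K | ∃ j : Fin m × Fin k, p = X j ^ (q - 1) - 1} ∪
          ⋃ i : Fin m, cycleBinomials K q k m γ i) :=
  vanishingIdeal_cyclesToricSet_general q k m γ hk K hq hq2
end

section
/- Let C be a cycle of odd length k = 2γ+1 and write F = {H_1,…,H_r} for the family of all γ-element subsets of {1,…,k}, so r = C(k,γ). Then for every d ≥ 1 the affine Hilbert function of I(X*_C) satisfies H_{X*_C}(d) = |A_{H_1}(d) ∪ ⋯ ∪ A_{H_r}(d)|. -/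
open MvPolynomial

/-- The affine Hilbert function of a set `X ⊆ K^σ`:
`H_X(d) = dim_K S_{≤d} / I(X)_{≤d}`. -/
noncomputable def affineHilbertFunction (K : Type) [Field K] {σ : Type} (X : Set (σ → K))
    (d : ℕ) : ℕ :=
  Module.finrank K
    (↥(MvPolynomial.restrictTotalDegree σ K d) ⧸
      Submodule.comap (MvPolynomial.restrictTotalDegree σ K d).subtype
        (Submodule.restrictScalars K (MvPolynomial.vanishingIdeal K X)))

/-- The set `A_H(d)` of (exponent vectors of) monomials attached to a `γ`-element subset
`H ⊆ {1,…,k}`: exponents `< q−1` on `H`, exponents `< (q−1)/2` on the complement of `H`,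
and total degree at most `d`. -/
def AH (q k d : ℕ) (H : Finset (Fin k)) : Set (Fin k → ℕ) :=
  {a | (∀ i ∈ H, a i < q - 1) ∧ (∀ j ∉ H, a j < (q - 1) / 2) ∧ ∑ i, a i ≤ d}

/-!
Put `m = (q - 1) / 2`. On `X = X*_C` the monomial `t^a` is a character of the group `X` that only
depends on `a` modulo `q - 1` and modulo the diagonal vector `(m, …, m)`: the coordinates of a
point of `X` are `(q - 1)`-th roots of unity and their product is a square. Reducing `a` modulo
`q - 1` and then, if more than `γ` entries are `≥ m`, replacing every entry `e` by
`(e + m) mod (q - 1)` does not raise the degree and lands in the set `B(d)` of exponents `< q - 1`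
with at most `γ` entries `≥ m`; this set is `⋃_H A_H(d)`. Conversely, distinct `b, b' ∈ B(d)` give
distinct characters: evaluating at the image of a point with a single coordinate `≠ 1` gives
`b_{j-1} + b_j ≡ b'_{j-1} + b'_j (mod q - 1)`, so around the odd cycle `b - b'` is a constant `c`
with `2c ≡ 0`, and `c ≡ m` would make the entries `≥ m` of `b` and `b'` complementary, impossible
when each has at most `γ` of the `2γ + 1`. By Dedekind's independence of characters,
`H_X(d) = |B(d)|`.
-/

open Finset

section Monomial

variable (K : Type) [Field K] {σ : Type} [Fintype σ]

def monomialHom (a : σ → ℕ) : (σ → K) →* K where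
  toFun y := ∏ i, y i ^ a i
  map_one' := by simp
  map_mul' y z := by simp [mul_pow, prod_mul_distrib]

variable {K}

@[simp]
lemma monomialHom_apply (a : σ → ℕ) (y : σ → K) : monomialHom K a y = ∏ i, y i ^ a i := rfl

lemma monomialHom_add (a b : σ → ℕ) :
    monomialHom K (a + b) = monomialHom K a * monomialHom K b := by
  ext y; simp [pow_add, prod_mul_distrib]

theorem affineHilbertFunction_eq_finrank_span (X : Set (σ → K)) (d : ℕ) :
    affineHilbertFunction K X d =
      Module.finrank K (Submodule.span K
        ((fun a => X.domRestrict (monomialHom K a)) '' {a | ∑ i, a i ≤ d})) := by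
  let ev : MvPolynomial σ K →ₗ[K] (X → K) :=
    LinearMap.pi fun x => (aeval (x : σ → K)).toLinearMap
  have hker : (vanishingIdeal K X).restrictScalars K = LinearMap.ker ev := by
    ext p
    simp [ev, mem_vanishingIdeal_iff, funext_iff]
  have hev : ∀ s : σ →₀ ℕ, ev (monomial s 1) = X.domRestrict (monomialHom K s) := fun s => by
    ext x
    simp [ev, eval_monomial, Finsupp.prod_fintype]
  have hrange : LinearMap.range (ev ∘ₗ (restrictTotalDegree σ K d).subtype) = Submodule.span K
      ((fun a => X.domRestrict (monomialHom K a)) '' {a | ∑ i, a i ≤ d}) := by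
    rw [LinearMap.range_comp, Submodule.range_subtype, restrictTotalDegree,
      restrictSupport_eq_span, Submodule.map_span, Set.image_image, funext hev,
      ← Set.image_image (fun a => X.domRestrict (monomialHom K a)) DFunLike.coe]
    congr 2
    ext a
    simp only [implies_true, Finsupp.sum_fintype, Set.mem_image, Set.mem_ofPred_eq]
    exact ⟨fun ⟨s, hs, hsa⟩ => hsa ▸ hs, fun ha => ⟨Finsupp.equivFunOnFinite.symm a, ha, rfl⟩⟩
  rw [affineHilbertFunction, hker, ← LinearMap.ker_comp,
    (LinearMap.quotKerEquivRange _).finrank_eq, hrange]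

theorem linearIndependent_domRestrict_monomialHom {ι : Type}
    (M : Submonoid (σ → K)) {a : ι → σ → ℕ}
    (ha : Function.Injective fun i => (M : Set (σ → K)).domRestrict (monomialHom K (a i))) :
    LinearIndependent K fun i => (M : Set (σ → K)).domRestrict (monomialHom K (a i)) :=
  (linearIndependent_monoidHom M K).comp (fun i => (monomialHom K (a i)).comp M.subtype)
    fun _ _ h => ha (congrArg DFunLike.coe h)

lemma monomialHom_mulSingle [DecidableEq σ]
    (e : σ → ℕ) (j : σ) (u : K) : monomialHom K e (Pi.mulSingle j u) = u ^ e j := by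
  rw [monomialHom_apply, Fintype.prod_eq_single j fun i hi => by simp [hi], Pi.mulSingle_eq_same]

lemma monomialHom_cycle {k : ℕ} (c : Fin k → ℕ) (x : Fin k → K) :
    monomialHom K c (fun i => x i * x (finRotate k i)) =
      monomialHom K (fun i => c i + c ((finRotate k).symm i)) x := by
  simp only [monomialHom_apply, mul_pow, prod_mul_distrib, pow_add]
  congr 1
  calc ∏ i, x (finRotate k i) ^ c i
      = ∏ i, x (finRotate k i) ^ c ((finRotate k).symm (finRotate k i)) := by
        simp only [Equiv.symm_apply_apply]
    _ = ∏ i, x i ^ c ((finRotate k).symm i) :=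
        Equiv.prod_comp (finRotate k) fun i => x i ^ c ((finRotate k).symm i)

end Monomial

lemma FiniteField.modEq_of_forall_pow_eq {K : Type} [Field K] [Fintype K] {c c' : ℕ}
    (h : ∀ u : K, u ≠ 0 → u ^ c = u ^ c') : c ≡ c' [MOD Fintype.card K - 1] := by
  obtain ⟨g, hg⟩ := IsCyclic.exists_ofOrder_eq_natCard (α := Kˣ)
  rw [Nat.card_units, Nat.card_eq_fintype_card] at hg
  rw [← hg, ← pow_eq_pow_iff_modEq]
  exact Units.ext (by push_cast; exact h g g.ne_zero)

open Fin.NatCast in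
theorem Fin.apply_eq_apply_zero_of_apply_add_one_eq_neg {G : Type} [AddCommGroup G] {n : ℕ}
    (hn : Even n) {δ : Fin (n + 1) → G} (h : ∀ j, δ (j + 1) = -δ j) (j : Fin (n + 1)) :
    δ j = δ 0 := by
  have hpow : ∀ t : ℕ, δ t = (-1 : ℤ) ^ t • δ 0 := by
    intro t
    induction t with
    | zero => simp
    | succ t ih => rw [Nat.cast_succ, h, ih, pow_succ, mul_neg_one, neg_smul]
  have hneg : δ 0 = -δ 0 := by
    simpa [(hn.add_one).neg_one_pow] using hpow (n + 1)
  rcases Nat.even_or_odd j with hj | hj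
  · simpa [hj.neg_one_pow] using hpow j
  · simpa [hj.neg_one_pow, ← hneg] using hpow j

lemma ZMod.eq_zero_or_eq_of_add_self_eq_zero {m : ℕ} [NeZero m] {x : ZMod (2 * m)}
    (hx : x + x = 0) : x = 0 ∨ x = m := by
  have hv : x.val < 2 * m := ZMod.val_lt x
  have hdvd : 2 * m ∣ 2 * x.val := by
    rw [← ZMod.natCast_eq_zero_iff, Nat.cast_mul, ZMod.natCast_zmod_val]
    simpa [two_mul] using hx
  obtain ⟨c, hc⟩ := (Nat.mul_dvd_mul_iff_left two_pos).1 hdvd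
  rw [← ZMod.natCast_zmod_val x, hc]
  rcases c with _ | _ | c
  · simp
  · simp
  · nlinarith

section StandardExponents

variable {ι : Type} {m γ d : ℕ}

def halfShift (m : ℕ) (a : ι → ℕ) : ι → ℕ := fun i => (a i + m) % (2 * m)

lemma halfShift_apply_of_lt {a : ι → ℕ} {i : ι} (hi : a i < 2 * m) :
    halfShift m a i = if a i < m then a i + m else a i - m := by
  unfold halfShift
  split_ifs with h
  · exact Nat.mod_eq_of_lt (by omega)
  · rw [show a i + m = a i - m + 2 * m by omega, Nat.add_mod_right, Nat.mod_eq_of_lt (by omega)]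

lemma le_halfShift_apply_iff {a : ι → ℕ} {i : ι} (hi : a i < 2 * m) :
    m ≤ halfShift m a i ↔ a i < m := by
  rw [halfShift_apply_of_lt hi]; split_ifs <;> omega

variable [Fintype ι]

lemma card_le_halfShift_add_card_le {a : ι → ℕ} (ha : ∀ i, a i < 2 * m) :
    #{i | m ≤ halfShift m a i} + #{i | m ≤ a i} = Fintype.card ι := by
  simp_rw [le_halfShift_apply_iff (ha _), ← not_le]
  rw [add_comm, card_filter_add_card_filter_not, card_univ]

lemma sum_halfShift_add {a : ι → ℕ} (ha : ∀ i, a i < 2 * m) :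
    ∑ i, halfShift m a i + m * #{i | m ≤ a i} =
      ∑ i, a i + m * #{i | m ≤ halfShift m a i} := by
  simp only [card_filter, mul_sum, ← sum_add_distrib]
  refine sum_congr rfl fun i _ => ?_
  have := ha i
  rw [halfShift_apply_of_lt this]
  split_ifs <;> omega

variable [DecidableEq ι]

def standardExponents (m γ d : ℕ) : Finset (ι → ℕ) :=
  {a ∈ Fintype.piFinset fun _ => range (2 * m) | #{i | m ≤ a i} ≤ γ ∧ ∑ i, a i ≤ d}

lemma mem_standardExponents {a : ι → ℕ} :
    a ∈ standardExponents m γ d ↔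
      (∀ i, a i < 2 * m) ∧ #{i | m ≤ a i} ≤ γ ∧ ∑ i, a i ≤ d := by
  simp [standardExponents]

theorem halfShift_mem_standardExponents (hι : Fintype.card ι = 2 * γ + 1) {a : ι → ℕ}
    (ha : ∀ i, a i < 2 * m) (hγa : γ < #{i | m ≤ a i}) (hd : ∑ i, a i ≤ d) :
    halfShift m a ∈ standardExponents m γ d := by
  have hcard := card_le_halfShift_add_card_le ha
  have hsum := sum_halfShift_add ha
  refine mem_standardExponents.2 ⟨fun i => Nat.mod_lt _ (by have := ha i; omega), by omega, ?_⟩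
  nlinarith

theorem eq_of_mem_standardExponents_of_modEq {b b' : Fin (2 * γ + 1) → ℕ}
    (hb : b ∈ standardExponents m γ d) (hb' : b' ∈ standardExponents m γ d)
    (h : ∀ j, b (j + 1) + b j ≡ b' (j + 1) + b' j [MOD 2 * m]) : b = b' := by
  obtain ⟨hb, hbγ, -⟩ := mem_standardExponents.1 hb
  obtain ⟨hb', hb'γ, -⟩ := mem_standardExponents.1 hb'
  have : NeZero m := ⟨by have := hb 0; omega⟩
  set δ : Fin (2 * γ + 1) → ZMod (2 * m) := fun j => b j - b' j
  have hδ : ∀ j, δ (j + 1) = -δ j := fun j => by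
    have := (ZMod.natCast_eq_natCast_iff _ _ _).2 (h j)
    push_cast at this
    linear_combination this
  have hconst := Fin.apply_eq_apply_zero_of_apply_add_one_eq_neg (even_two_mul γ) hδ
  have hcast : ∀ j, (b j : ZMod (2 * m)) = b' j + δ 0 := fun j => by
    rw [← hconst j]; ring
  have h00 : δ 0 + δ 0 = 0 := by
    have h1 := hδ 0
    rw [zero_add, hconst 1] at h1
    linear_combination h1
  rcases ZMod.eq_zero_or_eq_of_add_self_eq_zero h00 with h0 | h0
  · funext j
    have := (ZMod.natCast_eq_natCast_iff _ _ _).1 (by simpa [h0] using hcast j)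
    exact this.eq_of_lt_of_lt (hb j) (hb' j)
  · have hshift : b = halfShift m b' := funext fun j =>
      (Nat.mod_eq_of_lt (hb j)).symm.trans
        ((ZMod.natCast_eq_natCast_iff _ _ _).1 (by simpa [h0] using hcast j))
    have := card_le_halfShift_add_card_le hb'
    rw [← hshift, Fintype.card_fin] at this
    omega

theorem iUnion_AH_eq_standardExponents {q k : ℕ} (hm : q - 1 = 2 * m) (hγ : γ ≤ k) :
    ⋃ H ∈ {H : Finset (Fin k) | H.card = γ}, AH q k d H =
      ↑(standardExponents (ι := Fin k) m γ d) := by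
  ext a
  simp only [Set.mem_iUnion, AH, hm, Nat.mul_div_cancel_left m two_pos, Set.mem_ofPred_eq,
    exists_prop, mem_coe, mem_standardExponents]
  constructor
  · rintro ⟨H, hH, hlt, hlt', hd⟩
    refine ⟨fun i => ?_, hH ▸ card_le_card fun i hi => ?_, hd⟩
    · by_cases hi : i ∈ H
      · exact hlt i hi
      · linarith [hlt' i hi]
    · by_contra hiH
      exact absurd (mem_filter.1 hi).2 (not_le.2 (hlt' i hiH))
  · rintro ⟨hlt, hcard, hd⟩
    obtain ⟨H, hsub, -, hH⟩ :=
      exists_subsuperset_card_eq (subset_univ _) hcard (by simpa using hγ)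
    exact ⟨H, hH, fun i _ => hlt i, fun j hj => not_le.1 fun h => hj (hsub (by simp [h])), hd⟩

end StandardExponents

section CycleToricSet

variable {K : Type} [Field K] {k : ℕ} {y : Fin k → K}

lemma mem_cycleToricSet_iff :
    y ∈ cycleToricSet K k ↔
      ∃ x : Fin k → K, (∀ j, x j ≠ 0) ∧ y = fun j => x j * x (finRotate k j) :=
  exists_congr fun _ => and_congr_right fun _ => funext_iff.symm

def cycleToricSubmonoid (K : Type) [Field K] (k : ℕ) : Submonoid (Fin k → K) where
  carrier := cycleToricSet K k
  one_mem' := mem_cycleToricSet_iff.2 ⟨1, fun _ => one_ne_zero, by ext; simp⟩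
  mul_mem' := by
    simp only [mem_cycleToricSet_iff]
    rintro _ _ ⟨x, hx, rfl⟩ ⟨x', hx', rfl⟩
    exact ⟨x * x', fun j => mul_ne_zero (hx j) (hx' j), by ext; simp only [Pi.mul_apply]; ring⟩

lemma ne_zero_of_mem_cycleToricSet (hy : y ∈ cycleToricSet K k) (i : Fin k) : y i ≠ 0 := by
  obtain ⟨x, hx, rfl⟩ := mem_cycleToricSet_iff.1 hy
  exact mul_ne_zero (hx _) (hx _)

lemma prod_eq_sq_of_mem_cycleToricSet (hy : y ∈ cycleToricSet K k) :
    ∃ z ≠ 0, ∏ i, y i = z ^ 2 := by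
  obtain ⟨x, hx, rfl⟩ := mem_cycleToricSet_iff.1 hy
  refine ⟨∏ i, x i, prod_ne_zero_iff.2 fun i _ => hx i, ?_⟩
  rw [prod_mul_distrib, Equiv.prod_comp (finRotate k) x, sq]

variable [Fintype K] {m γ d : ℕ}

lemma pow_card_sub_one_of_mem_cycleToricSet (hy : y ∈ cycleToricSet K k) (i : Fin k) :
    y i ^ (Fintype.card K - 1) = 1 :=
  FiniteField.pow_card_sub_one_eq_one _ (ne_zero_of_mem_cycleToricSet hy i)

lemma monomialHom_mod_of_mem_cycleToricSet (hy : y ∈ cycleToricSet K k) (a : Fin k → ℕ) :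
    monomialHom K (fun i => a i % (Fintype.card K - 1)) y = monomialHom K a y := by
  simp only [monomialHom_apply]
  exact Fintype.prod_congr _ _ fun i =>
    pow_eq_pow_of_modEq (Nat.mod_modEq _ _) (pow_card_sub_one_of_mem_cycleToricSet hy i)

lemma monomialHom_add_const_of_mem_cycleToricSet (hy : y ∈ cycleToricSet K k)
    (hm : Fintype.card K - 1 = 2 * m) (a : Fin k → ℕ) :
    monomialHom K (a + fun _ => m) y = monomialHom K a y := by
  obtain ⟨z, hz, hyz⟩ := prod_eq_sq_of_mem_cycleToricSet hy
  rw [monomialHom_add, MonoidHom.mul_apply, monomialHom_apply (fun _ => m), prod_pow, hyz,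
    ← pow_mul, ← hm, FiniteField.pow_card_sub_one_eq_one z hz, mul_one]

lemma modEq_of_domRestrict_monomialHom_eq {b b' : Fin k → ℕ}
    (h : (cycleToricSet K k).domRestrict (monomialHom K b) =
      (cycleToricSet K k).domRestrict (monomialHom K b')) (j : Fin k) :
    b j + b ((finRotate k).symm j) ≡ b' j + b' ((finRotate k).symm j)
      [MOD Fintype.card K - 1] := by
  refine FiniteField.modEq_of_forall_pow_eq fun u hu => ?_
  have hx : ∀ i, Pi.mulSingle (M := fun _ => K) j u i ≠ 0 := fun i => by
    rw [Pi.mulSingle_apply]; split_ifs <;> simp [hu]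
  have := congrFun h ⟨_, mem_cycleToricSet_iff.2 ⟨_, hx, rfl⟩⟩
  simpa only [Set.domRestrict_apply, monomialHom_cycle, monomialHom_mulSingle] using this

lemma monomialHom_halfShift_of_mem_cycleToricSet (hy : y ∈ cycleToricSet K k)
    (hm : Fintype.card K - 1 = 2 * m) (a : Fin k → ℕ) :
    monomialHom K (halfShift m a) y = monomialHom K a y := by
  have := monomialHom_mod_of_mem_cycleToricSet hy (a + fun _ => m)
  rw [hm] at this
  rw [← monomialHom_add_const_of_mem_cycleToricSet hy hm a, ← this]
  rfl

theorem exists_mem_standardExponents_domRestrict_eq (hm : Fintype.card K - 1 = 2 * m)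
    (a : Fin (2 * γ + 1) → ℕ) :
    ∃ b ∈ standardExponents m γ (∑ i, a i),
      (cycleToricSet K _).domRestrict (monomialHom K b) =
        (cycleToricSet K _).domRestrict (monomialHom K a) := by
  have hm0 : 0 < 2 * m := by have := Fintype.one_lt_card (α := K); omega
  set a' : Fin (2 * γ + 1) → ℕ := fun i => a i % (2 * m)
  have ha' : ∀ i, a' i < 2 * m := fun i => Nat.mod_lt _ hm0
  have hsum : ∑ i, a' i ≤ ∑ i, a i := sum_le_sum fun i _ => Nat.mod_le _ _
  have heq : (cycleToricSet K _).domRestrict (monomialHom K a') =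
      (cycleToricSet K _).domRestrict (monomialHom K a) := by
    ext y
    have := monomialHom_mod_of_mem_cycleToricSet y.2 a
    rwa [hm] at this
  by_cases hγa : #{i | m ≤ a' i} ≤ γ
  · exact ⟨a', mem_standardExponents.2 ⟨ha', hγa, hsum⟩, heq⟩
  · refine ⟨halfShift m a', halfShift_mem_standardExponents (Fintype.card_fin _) ha'
      (not_le.1 hγa) hsum, heq ▸ ?_⟩
    ext y
    exact monomialHom_halfShift_of_mem_cycleToricSet y.2 hm a'

theorem image_domRestrict_monomialHom_eq (hm : Fintype.card K - 1 = 2 * m) :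
    (fun a => (cycleToricSet K (2 * γ + 1)).domRestrict (monomialHom K a)) ''
        {a | ∑ i, a i ≤ d} =
      (fun a => (cycleToricSet K (2 * γ + 1)).domRestrict (monomialHom K a)) ''
        ↑(standardExponents (ι := Fin (2 * γ + 1)) m γ d) := by
  refine subset_antisymm ?_ (Set.image_mono fun b hb => (mem_standardExponents.1 hb).2.2)
  rintro _ ⟨a, ha, rfl⟩
  obtain ⟨b, hb, hba⟩ := exists_mem_standardExponents_domRestrict_eq hm a
  obtain ⟨hb, hbγ, hbd⟩ := mem_standardExponents.1 hb
  exact ⟨b, mem_standardExponents.2 ⟨hb, hbγ, hbd.trans ha⟩, hba⟩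

theorem injOn_domRestrict_monomialHom (hm : Fintype.card K - 1 = 2 * m) :
    Set.InjOn (fun b => (cycleToricSet K (2 * γ + 1)).domRestrict (monomialHom K b))
      ↑(standardExponents (ι := Fin (2 * γ + 1)) m γ d) := by
  intro b hb b' hb' h
  refine eq_of_mem_standardExponents_of_modEq hb hb' fun j => ?_
  have := modEq_of_domRestrict_monomialHom_eq h (finRotate _ j)
  rwa [Equiv.symm_apply_apply, hm, finRotate_apply] at this

end CycleToricSet

theorem hilbert_cycle_eq_card_union_general (q k γ : ℕ) (hk : k = 2 * γ + 1)
    (K : Type) [Field K] [Fintype K] (hq : Fintype.card K = q) (hq2 : 2 ∣ q - 1)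
    (d : ℕ) :
    affineHilbertFunction K (cycleToricSet K k) d =
      (⋃ H ∈ {H : Finset (Fin k) | H.card = γ}, AH q k d H).ncard := by
  obtain ⟨m, hm⟩ := hq2
  subst hk hq
  have hind := linearIndependent_domRestrict_monomialHom (cycleToricSubmonoid K _)
    (Set.injOn_iff_injective.1 (injOn_domRestrict_monomialHom (γ := γ) (d := d) hm))
  rw [iUnion_AH_eq_standardExponents hm (by omega), Set.ncard_coe_finset,
    affineHilbertFunction_eq_finrank_span, image_domRestrict_monomialHom_eq hm,
    Set.image_eq_range]
  exact (finrank_span_eq_card hind).trans (by simp)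

/-- Let `C` be a cycle of odd length `k = 2γ+1` and let `H₁,…,H_r` be the
`γ`-element subsets of `{1,…,k}`. Then for every `d ≥ 1`,
`H_{X*_C}(d) = |A_{H₁}(d) ∪ ⋯ ∪ A_{H_r}(d)|`. -/
theorem hilbert_cycle_eq_card_union (q k γ : ℕ) (hγ : 1 ≤ γ) (hk : k = 2 * γ + 1)
    (K : Type) [Field K] [Fintype K] (hq : Fintype.card K = q) (hq2 : 2 ∣ q - 1)
    (d : ℕ) (hd : 1 ≤ d) :
    affineHilbertFunction K (cycleToricSet K k) d =
      (⋃ H ∈ {H : Finset (Fin k) | H.card = γ}, AH q k d H).ncard :=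
  hilbert_cycle_eq_card_union_general q k γ hk K hq hq2 d
end

section
/- For 0 ≤ i ≤ γ < k, the vanishing ideal of the degenerate torus X*_i = {(x_1,…,x_i,x_{i+1}^2,…,x_k^2) : x_1,…,x_k ∈ K*} ⊆ K^k is I(X*_i) = ⟨t_1^{q−1}−1, …, t_i^{q−1}−1, t_{i+1}^{(q−1)/2}−1, …, t_k^{(q−1)/2}−1⟩ in S = K[t_1,…,t_k]. -/
open MvPolynomial

/-- The degenerate torus `X*_i = {(x₁,…,x_i,x_{i+1}²,…,x_k²) : x_j ∈ K*} ⊆ K^k`: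
the first `i` coordinates are arbitrary nonzero elements and the remaining ones are
nonzero squares. -/
def degenerateTorus (K : Type) [Field K] (k i : ℕ) : Set (Fin k → K) :=
  {y | ∃ x : Fin k → K, (∀ j, x j ≠ 0) ∧
    ∀ j : Fin k, y j = if (j : ℕ) < i then x j else x j ^ 2}

/-!
Put `d_j = q - 1` for `j < i` and `d_j = (q - 1) / 2` otherwise. Since `K*` is cyclic of order
`q - 1`, the `m`-th powers of `K*` (for `m ∣ q - 1`) are exactly the solutions of
`y ^ ((q - 1) / m) = 1`; hence `X*_i` is the grid `∏ⱼ μ_{d_j}` of roots of unity. As `d_j ∣ q - 1`,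
`K` contains a primitive `d_j`-th root of unity, so `∏_{ζ ∈ μ_{d_j}} (t_j - ζ) = t_j ^ d_j - 1`.
By the Combinatorial Nullstellensatz, the vanishing ideal of a grid `∏ⱼ Sⱼ` is generated by the
polynomials `∏_{s ∈ Sⱼ} (t_j - s)`.
-/

theorem MvPolynomial.vanishingIdeal_pi_finset {σ R : Type*} [Finite σ] [Field R]
    (S : σ → Finset R) (hS : ∀ i, (S i).Nonempty) :
    vanishingIdeal R (Set.univ.pi fun i => (S i : Set R)) =
      Ideal.span (Set.range fun i => ∏ s ∈ S i, (X i - C s)) := by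
  refine le_antisymm (fun f hf => ?_) (Ideal.span_le.mpr ?_)
  · obtain ⟨h, -, rfl⟩ := combinatorial_nullstellensatz_exists_linearCombination S hS f
      fun x hx => hf x (Set.mem_univ_pi.mpr hx)
    rw [Ideal.span, ← Finsupp.range_linearCombination]
    exact LinearMap.mem_range_self _ h
  · rintro _ ⟨i, rfl⟩ x hx
    rw [map_prod]
    exact Finset.prod_eq_zero (hx i trivial) (by simp)

theorem IsCyclic.range_powMonoidHom_eq_ker {G : Type*} [CommGroup G] [IsCyclic G] [Finite G]
    {m : ℕ} (hm : m ∣ Nat.card G) :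
    (powMonoidHom m : G →* G).range = (powMonoidHom (Nat.card G / m)).ker := by
  refine Subgroup.eq_of_le_of_card_ge ?_ ?_
  · rintro _ ⟨x, rfl⟩
    simp [← pow_mul, Nat.mul_div_cancel' hm]
  · rw [card_powMonoidHom_ker, card_powMonoidHom_range, Nat.gcd_eq_right hm,
      Nat.gcd_eq_right (Nat.div_dvd_of_dvd hm)]

namespace FiniteField

variable {K : Type*} [Field K] [Fintype K]

theorem card_sub_one_pos : 0 < Fintype.card K - 1 :=
  Nat.sub_pos_of_lt Fintype.one_lt_card

theorem card_sub_one_div_pos {m : ℕ} (hm : m ∣ Fintype.card K - 1) :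
    0 < (Fintype.card K - 1) / m :=
  Nat.div_pos (Nat.le_of_dvd card_sub_one_pos hm) (Nat.pos_of_dvd_of_pos hm card_sub_one_pos)

theorem exists_ne_zero_pow_eq_iff {m : ℕ} (hm : m ∣ Fintype.card K - 1) (y : K) :
    (∃ x ≠ 0, x ^ m = y) ↔ y ^ ((Fintype.card K - 1) / m) = 1 := by
  rcases eq_or_ne y 0 with rfl | hy
  · simp [(Nat.pos_of_dvd_of_pos hm card_sub_one_pos).ne', (card_sub_one_div_pos hm).ne']
  lift y to Kˣ using hy.isUnit
  have hcard : Nat.card Kˣ = Fintype.card K - 1 := by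
    rw [Nat.card_units, Nat.card_eq_fintype_card]
  have := congrArg (y ∈ ·) (IsCyclic.range_powMonoidHom_eq_ker (hcard ▸ hm))
  simp only [MonoidHom.mem_range, MonoidHom.mem_ker, powMonoidHom_apply, hcard] at this
  rw [← Units.val_pow_eq_pow_val, Units.val_eq_one, ← this]
  exact ⟨fun ⟨x, hx, h⟩ => ⟨Units.mk0 x hx, Units.ext (by simpa)⟩,
    fun ⟨v, h⟩ => ⟨v, v.ne_zero, by rw [← h, Units.val_pow_eq_pow_val]⟩⟩

theorem prod_nthRootsFinset_sub {A : Type*} [CommRing A] [Algebra K A] {d : ℕ}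
    (hd : d ∣ Fintype.card K - 1) (a : A) :
    ∏ ζ ∈ Polynomial.nthRootsFinset d (1 : K), (a - algebraMap K A ζ) = a ^ d - 1 := by
  have hd0 : 0 < d := Nat.pos_of_dvd_of_pos hd card_sub_one_pos
  obtain ⟨g, hg⟩ := IsCyclic.exists_ofOrder_eq_natCard (α := Kˣ)
  rw [Nat.card_units, Nat.card_eq_fintype_card] at hg
  have hζ := (IsPrimitiveRoot.coe_units_iff.mpr (hg ▸ IsPrimitiveRoot.orderOf g)).pow_of_dvd
    (card_sub_one_div_pos hd).ne' (Nat.div_dvd_of_dvd hd)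
  rw [Nat.div_div_self hd card_sub_one_pos.ne'] at hζ
  simpa [map_prod] using
    congrArg (Polynomial.aeval a) (Polynomial.X_pow_sub_one_eq_prod hd0 hζ).symm

theorem vanishingIdeal_pi_nthRootsFinset {σ : Type*} [Finite σ] {d : σ → ℕ}
    (hd : ∀ j, d j ∣ Fintype.card K - 1) :
    vanishingIdeal K (Set.univ.pi fun j => (Polynomial.nthRootsFinset (d j) (1 : K) : Set K)) =
      Ideal.span (Set.range fun j => X j ^ d j - 1) := by
  have hd0 (j : σ) : 0 < d j := Nat.pos_of_dvd_of_pos (hd j) card_sub_one_pos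
  rw [vanishingIdeal_pi_finset _ fun j => ⟨1, Polynomial.one_mem_nthRootsFinset (hd0 j)⟩]
  simp only [← MvPolynomial.algebraMap_eq, prod_nthRootsFinset_sub (hd _)]

end FiniteField

open FiniteField in
theorem degenerateTorus_eq_pi_nthRootsFinset {K : Type} [Field K] [Fintype K] (k i : ℕ)
    (h2 : 2 ∣ Fintype.card K - 1) :
    degenerateTorus K k i = Set.univ.pi fun j : Fin k => (Polynomial.nthRootsFinset
      ((Fintype.card K - 1) / if (j : ℕ) < i then 1 else 2) (1 : K) : Set K) := by
  have hm (j : Fin k) : (if (j : ℕ) < i then 1 else 2) ∣ Fintype.card K - 1 := by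
    split_ifs
    exacts [one_dvd _, h2]
  ext y
  simp only [Set.mem_univ_pi, Finset.mem_coe,
    Polynomial.mem_nthRootsFinset (card_sub_one_div_pos (hm _)), ← exists_ne_zero_pow_eq_iff (hm _)]
  constructor
  · rintro ⟨x, hx, hy⟩ j
    exact ⟨x j, hx j, by rw [hy j]; split_ifs <;> simp⟩
  · intro h
    choose x hx hy using h
    exact ⟨x, hx, fun j => by rw [← hy j]; split_ifs <;> simp⟩

theorem vanishingIdeal_degenerateTorus_general (q k i : ℕ)
    (K : Type) [Field K] [Fintype K] (hq : Fintype.card K = q) (hq2 : 2 ∣ q - 1) :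
    MvPolynomial.vanishingIdeal K (degenerateTorus K k i) =
      Ideal.span {p : MvPolynomial (Fin k) K | ∃ j : Fin k,
        p = if (j : ℕ) < i then X j ^ (q - 1) - 1 else X j ^ ((q - 1) / 2) - 1} := by
  subst hq
  rw [degenerateTorus_eq_pi_nthRootsFinset k i hq2,
    FiniteField.vanishingIdeal_pi_nthRootsFinset fun j =>
      Nat.div_dvd_of_dvd (by split_ifs; exacts [one_dvd _, hq2])]
  congr 1
  ext p
  refine exists_congr fun j => ?_
  split_ifs with hj <;> simp [hj, eq_comm]

/-- For `0 ≤ i ≤ γ < k`, the vanishing ideal of the degenerate torus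
`X*_i` is `I(X*_i) = ⟨t₁^{q−1}−1, …, t_i^{q−1}−1, t_{i+1}^{(q−1)/2}−1, …, t_k^{(q−1)/2}−1⟩`. -/
theorem vanishingIdeal_degenerateTorus (q k γ i : ℕ) (hiγ : i ≤ γ) (hγk : γ < k)
    (K : Type) [Field K] [Fintype K] (hq : Fintype.card K = q) (hq2 : 2 ∣ q - 1) :
    MvPolynomial.vanishingIdeal K (degenerateTorus K k i) =
      Ideal.span {p : MvPolynomial (Fin k) K | ∃ j : Fin k,
        p = if (j : ℕ) < i then X j ^ (q - 1) - 1 else X j ^ ((q - 1) / 2) - 1} :=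
  vanishingIdeal_degenerateTorus_general q k i K hq hq2
end

section
/- For 0 ≤ i ≤ γ < k and every d ≥ 1, the affine Hilbert function of the degenerate torus X*_i satisfies H_{X*_i}(d) = |A_i(d)|, where A_i(d) is the set of monomials t_1^{a_1}⋯t_k^{a_k} with 0 ≤ a_j < q−1 for 1 ≤ j ≤ i, 0 ≤ a_j < (q−1)/2 for i+1 ≤ j ≤ k, and a_1+⋯+a_k ≤ d. -/
/-!
`X*_i` is the grid `S₁ × ⋯ × S_k`, where `S_j` is the set of nonzero `e`-th powers with `e = 1`
for `j ≤ i` and `e = 2` otherwise; `K*` is cyclic of order `q - 1`, so `|S_j| = q - 1`, resp.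
`(q - 1) / 2`. On any grid, the reduced monomials (exponent of `t_j` below `|S_j|`) of degree
`≤ d` span a complement of `I_{≤d}` in `S_{≤d}`: dividing by the polynomials
`∏_{s ∈ S_j} (t_j - s)` in degree-lexicographic order reduces a polynomial modulo `I` without
raising its degree, and a reduced polynomial vanishing on the grid is zero by the
combinatorial Nullstellensatz.
-/

open MvPolynomial

open Finset MonomialOrder

namespace MvPolynomial

variable {K σ : Type*} [Field K]

theorem degree_prod_X_sub_C {R : Type*} [CommRing R] [Nontrivial R] (m : MonomialOrder σ) (i : σ)
    (S : Finset R) :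
    m.degree (∏ s ∈ S, (X i - C s)) = Finsupp.single i #S := by
  rw [m.degree_prod_of_regular fun s _ ↦ by rw [m.monic_X_sub_C]; exact isRegular_one]
  simp [m.degree_X_sub_C]

theorem prod_X_sub_C_mem_vanishingIdeal (S : σ → Finset K) (i : σ) :
    ∏ s ∈ S i, (X i - C s) ∈ vanishingIdeal K {x | ∀ i, x i ∈ S i} := by
  rw [mem_vanishingIdeal_iff]
  intro x hx
  simpa [eval_prod] using prod_eq_zero (hx i) (sub_self (x i))

theorem exists_reduced_sub_mem_vanishingIdeal [Finite σ] (S : σ → Finset K)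
    (f : MvPolynomial σ K) :
    ∃ r : MvPolynomial σ K, (∀ c ∈ r.support, ∀ i, c i < #(S i)) ∧
      r.totalDegree ≤ f.totalDegree ∧ f - r ∈ vanishingIdeal K {x | ∀ i, x i ∈ S i} := by
  let : LinearOrder σ := WellOrderingRel.isWellOrder.linearOrder
  obtain ⟨g, r, hfr, hdeg, hr⟩ := degLex.div (b := fun i ↦ ∏ s ∈ S i, (X i - C s))
    (fun i ↦ by simp [(Monic.prod fun s _ ↦ degLex.monic_X_sub_C i s).leadingCoeff_eq_one]) f
  have hsub : f - r = Finsupp.linearCombination _ (fun i ↦ ∏ s ∈ S i, (X i - C s)) g := by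
    rw [hfr, add_sub_cancel_right]
  refine ⟨r, fun c hc i ↦ ?_, ?_, ?_⟩
  · simpa [degree_prod_X_sub_C, Finsupp.single_le_iff] using hr c hc i
  · have hquot : (Finsupp.linearCombination _ (fun i ↦ ∏ s ∈ S i, (X i - C s)) g).totalDegree ≤
        f.totalDegree := by
      rw [Finsupp.linearCombination_apply, Finsupp.sum]
      refine (totalDegree_finsetSum _ _).trans (Finset.sup_le fun i _ ↦ ?_)
      rw [smul_eq_mul, mul_comm]
      exact degLex_totalDegree_monotone (hdeg i)
    calc r.totalDegree = (f - (f - r)).totalDegree := by rw [sub_sub_cancel]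
      _ ≤ f.totalDegree := (totalDegree_sub _ _).trans (max_le le_rfl (hsub ▸ hquot))
  · rw [hsub, Finsupp.linearCombination_apply]
    exact Ideal.sum_mem _ fun i _ ↦ Ideal.mul_mem_left _ _ (prod_X_sub_C_mem_vanishingIdeal S i)

def reducedExponents (S : σ → Finset K) (d : ℕ) : Set (σ →₀ ℕ) :=
  {a | (∀ i, a i < #(S i)) ∧ a.degree ≤ d}

theorem isCompl_restrictSupport_reducedExponents [Finite σ] (S : σ → Finset K) (d : ℕ) :
    IsCompl ((restrictSupport K (reducedExponents S d)).comap (restrictTotalDegree σ K d).subtype)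
      (((vanishingIdeal K {x | ∀ i, x i ∈ S i}).restrictScalars K).comap
        (restrictTotalDegree σ K d).subtype) := by
  constructor
  · rw [Submodule.disjoint_def]
    rintro ⟨f, _⟩ hred hvan
    simp only [Submodule.mem_comap, Submodule.coe_subtype, Submodule.restrictScalars_mem,
      mem_vanishingIdeal_iff, mem_restrictSupport_iff] at hred hvan
    rw [Submodule.mk_eq_zero]
    by_contra hf
    obtain ⟨m, hm⟩ := support_nonempty.mpr hf
    refine hf (eq_zero_of_eval_zero_at_prod_finset f S (fun i ↦ ?_) hvan)
    rw [degreeOf_lt_iff ((Nat.zero_le _).trans_lt ((hred hm).1 i))]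
    exact fun c hc ↦ (hred hc).1 i
  · rw [Submodule.codisjoint_iff_exists_add_eq]
    rintro ⟨f, hf⟩
    obtain ⟨r, hr, hdeg, hfr⟩ := exists_reduced_sub_mem_vanishingIdeal S f
    rw [mem_restrictTotalDegree] at hf
    have hrd : r ∈ restrictTotalDegree σ K d :=
      (mem_restrictTotalDegree _ _ _).mpr (hdeg.trans hf)
    refine ⟨⟨r, hrd⟩, ⟨f - r, sub_mem ?_ hrd⟩, ?_, hfr, by ext; simp⟩
    · exact (mem_restrictTotalDegree _ _ _).mpr hf
    · exact fun c hc ↦ ⟨hr c hc, (le_totalDegree hc).trans (hdeg.trans hf)⟩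

end MvPolynomial

theorem affineHilbertFunction_pi_finset {σ K : Type} [Fintype σ] [Field K]
    (S : σ → Finset K) (d : ℕ) :
    affineHilbertFunction K {x | ∀ i, x i ∈ S i} d =
      {a : σ → ℕ | (∀ i, a i < #(S i)) ∧ ∑ i, a i ≤ d}.ncard := by
  have hle : restrictSupport K (reducedExponents S d) ≤ restrictTotalDegree σ K d :=
    restrictSupport_mono K fun a ha ↦ ha.2
  rw [affineHilbertFunction, (Submodule.quotientEquivOfIsCompl _ _
    (isCompl_restrictSupport_reducedExponents S d).symm).finrank_eq,
    (Submodule.comapSubtypeEquivOfLe hle).finrank_eq,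
    Module.finrank_eq_nat_card_basis (basisRestrictSupport K _), ← Nat.card_coe_set_eq]
  exact Nat.card_congr <| Finsupp.equivFunOnFinite.subtypeEquiv fun a ↦ by
    simp [reducedExponents, Finsupp.degree_eq_sum]

section PowUnits

variable (K : Type*) [Field K] [Fintype K] [DecidableEq K]

def powUnits (e : ℕ) : Finset K := univ.image fun u : Kˣ ↦ (u : K) ^ e

variable {K} in
theorem mem_powUnits {e : ℕ} {y : K} : y ∈ powUnits K e ↔ ∃ u : Kˣ, (u : K) ^ e = y := by
  simp [powUnits]

theorem card_powUnits (e : ℕ) :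
    #(powUnits K e) = (Fintype.card K - 1) / (Fintype.card K - 1).gcd e := by
  have hrange : #(powUnits K e) = Nat.card (powMonoidHom e : Kˣ →* Kˣ).range := by
    have hcomp : (fun u : Kˣ ↦ (u : K) ^ e) = Units.val ∘ fun u ↦ u ^ e := by
      ext; simp
    rw [powUnits, hcomp, ← image_image, card_image_of_injective _ Units.val_injective,
      ← Set.toFinset_range, Set.toFinset_card, ← Nat.card_eq_fintype_card]
    rfl
  rw [hrange, IsCyclic.card_powMonoidHom_range, Nat.card_eq_fintype_card, Fintype.card_units]

end PowUnits

theorem degenerateTorus_eq_pi_powUnits (K : Type) [Field K] [Fintype K] [DecidableEq K]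
    (k i : ℕ) :
    degenerateTorus K k i =
      {y | ∀ j : Fin k, y j ∈ powUnits K (if (j : ℕ) < i then 1 else 2)} := by
  ext y
  simp only [degenerateTorus, Set.mem_ofPred_eq, mem_powUnits]
  constructor
  · rintro ⟨x, hx, hy⟩ j
    exact ⟨Units.mk0 (x j) (hx j), by rw [hy j]; split_ifs <;> simp⟩
  · intro hy
    choose u hu using hy
    exact ⟨fun j ↦ u j, fun j ↦ (u j).ne_zero, fun j ↦ by rw [← hu j]; split_ifs <;> simp⟩

theorem hilbert_degenerateTorus_general (q k i : ℕ)
    (K : Type) [Field K] [Fintype K] (hq : Fintype.card K = q) (hq2 : 2 ∣ q - 1)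
    (d : ℕ) :
    affineHilbertFunction K (degenerateTorus K k i) d =
      {a : Fin k → ℕ | (∀ j : Fin k, (j : ℕ) < i → a j < q - 1) ∧
        (∀ j : Fin k, i ≤ (j : ℕ) → a j < (q - 1) / 2) ∧ ∑ j, a j ≤ d}.ncard := by
  classical
  rw [degenerateTorus_eq_pi_powUnits, affineHilbertFunction_pi_finset]
  congr! 3 with a
  simp only [apply_ite, card_powUnits, hq, Nat.gcd_one_right, Nat.div_one,
    Nat.gcd_eq_right hq2]
  rw [← and_assoc, ← forall_and]
  refine and_congr_left' (forall_congr' fun j ↦ ?_)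
  split_ifs with h
  · simp [h]
  · simp [h, not_lt.mp h]

/-- For `0 ≤ i ≤ γ < k` and every `d ≥ 1`, the affine Hilbert function of
the degenerate torus `X*_i` satisfies `H_{X*_i}(d) = |A_i(d)|`, where `A_i(d)` is the set of
(exponent vectors of) monomials `t₁^{a₁}⋯t_k^{a_k}` with `a_j < q−1` for `j ≤ i`,
`a_j < (q−1)/2` for `j > i`, and total degree at most `d`. -/
theorem hilbert_degenerateTorus (q k γ i : ℕ) (hiγ : i ≤ γ) (hγk : γ < k)
    (K : Type) [Field K] [Fintype K] (hq : Fintype.card K = q) (hq2 : 2 ∣ q - 1)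
    (d : ℕ) (hd : 1 ≤ d) :
    affineHilbertFunction K (degenerateTorus K k i) d =
      {a : Fin k → ℕ | (∀ j : Fin k, (j : ℕ) < i → a j < q - 1) ∧
        (∀ j : Fin k, i ≤ (j : ℕ) → a j < (q - 1) / 2) ∧ ∑ j, a j ≤ d}.ncard :=
  hilbert_degenerateTorus_general q k i K hq hq2 d
end
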